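/- arXiv:2107.09838 — 7 statements merged into one kernel-verified Lean document; each statement's English description precedes it below -/
import Mathlib

section
/- Fix m ≥ 1 and 1 ≤ i ≤ m−1. If a ∈ A(m) has a descent at i, but b, c ∈ A(m) do not (i.e. b_i = b_{i+1} and c_i = c_{i+1}), then E_3(a⁺, b, c) + E_3(a⁻, b, c) = 2 E_3(a, b, c), where a⁺ = a^{+,i} and a⁻ = a^{−,i}. -/
/-- `a` belongs to `A(m)`: integer sequences with `m ≥ a_1 ≥ ⋯ ≥ a_m ≥ 0`. -/
def memA (m : ℕ) (a : Fin m → ℤ) : Prop :=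
  (∀ j, 0 ≤ a j) ∧ (∀ j, a j ≤ (m : ℤ)) ∧ Antitone a

/-- Expectation of a sequence: `E(a) = (a_1 + ⋯ + a_m)/m²`. -/
noncomputable def Eseq {m : ℕ} (a : Fin m → ℤ) : ℝ :=
  (∑ j, (a j : ℝ)) / (m : ℝ) ^ 2

/-- Pointwise product of sequences: `(ab)_j = min(a_j, b_j)`. -/
def prodMin {m : ℕ} (a b : Fin m → ℤ) : Fin m → ℤ := fun j => min (a j) (b j)

/-- `a⁺ = a^{+,i}`: agrees with `a` except `(a⁺)_{i+1} = a_i` (here `i` is 0-based,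
so positions `i, i+1` are the 1-based positions `i+1, i+2`). -/
def aPlus {m : ℕ} (a : Fin m → ℤ) (i : ℕ) (hi : i + 1 < m) : Fin m → ℤ :=
  Function.update a ⟨i + 1, hi⟩ (a ⟨i, by omega⟩)

/-- `a⁻ = a^{−,i}`: agrees with `a` except `(a⁻)_i = a_{i+1}`. -/
def aMinus {m : ℕ} (a : Fin m → ℤ) (i : ℕ) (hi : i + 1 < m) : Fin m → ℤ :=
  Function.update a ⟨i, by omega⟩ (a ⟨i + 1, hi⟩)

/-- `a⋆ = a^{⋆,i}`: agrees with `a` except `(a⋆)_{i+1} = a_{i+1} + 1`. -/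
def aStar {m : ℕ} (a : Fin m → ℤ) (i : ℕ) (hi : i + 1 < m) : Fin m → ℤ :=
  Function.update a ⟨i + 1, hi⟩ (a ⟨i + 1, hi⟩ + 1)

/-- `E₃(a,b,c) = 2E(abc) + E(a)E(b)E(c) − E(a)E(bc) − E(b)E(ac) − E(c)E(ab)`. -/
noncomputable def E3seq {m : ℕ} (a b c : Fin m → ℤ) : ℝ :=
  2 * Eseq (prodMin a (prodMin b c)) + Eseq a * Eseq b * Eseq c
    - Eseq a * Eseq (prodMin b c) - Eseq b * Eseq (prodMin a c)
    - Eseq c * Eseq (prodMin a b)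


lemma sum_update_int {m : ℕ} (f : Fin m → ℤ) (k : Fin m) (v : ℤ) :
    ∑ j, Function.update f k v j = ∑ j, f j - f k + v := by
  rw [Finset.sum_update_of_mem (Finset.mem_univ k)]
  rw [Finset.sum_sdiff_eq_sub (by simp)]
  simp [Finset.sum_singleton]
  ring

lemma key {m : ℕ} (i : ℕ) (hi : i + 1 < m) (a x : Fin m → ℤ)
    (hx : x ⟨i, by omega⟩ = x ⟨i + 1, hi⟩) :
    Eseq (prodMin (aPlus a i hi) x) + Eseq (prodMin (aMinus a i hi) x)
      = 2 * Eseq (prodMin a x) := by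
  have h1 : prodMin (aPlus a i hi) x
      = Function.update (prodMin a x) ⟨i + 1, hi⟩ (min (a ⟨i, by omega⟩) (x ⟨i + 1, hi⟩)) := by
    funext j
    by_cases h : j = (⟨i + 1, hi⟩ : Fin m) <;>
      simp [prodMin, aPlus, Function.update_apply, h]
  have h2 : prodMin (aMinus a i hi) x
      = Function.update (prodMin a x) ⟨i, by omega⟩ (min (a ⟨i + 1, hi⟩) (x ⟨i, by omega⟩)) := by
    funext j
    by_cases h : j = (⟨i, by omega⟩ : Fin m) <;>
      simp [prodMin, aMinus, Function.update_apply, h]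
  have hsum : (∑ j, prodMin (aPlus a i hi) x j) + (∑ j, prodMin (aMinus a i hi) x j)
      = 2 * ∑ j, prodMin a x j := by
    rw [h1, h2, sum_update_int, sum_update_int]
    have e1 : prodMin a x ⟨i + 1, hi⟩ = min (a ⟨i + 1, hi⟩) (x ⟨i, by omega⟩) := by
      simp [prodMin, hx]
    have e2 : prodMin a x ⟨i, by omega⟩ = min (a ⟨i, by omega⟩) (x ⟨i + 1, hi⟩) := by
      simp [prodMin, hx]
    rw [e1, e2]; ring
  simp only [Eseq, ← add_div, ← two_mul, ← mul_div_assoc]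
  rw [← Int.cast_sum, ← Int.cast_sum, ← Int.cast_sum, ← Int.cast_add, hsum]
  push_cast; ring

lemma keyE {m : ℕ} (i : ℕ) (hi : i + 1 < m) (a : Fin m → ℤ) (ha : ∀ j, a j ≤ (m : ℤ)) :
    Eseq (aPlus a i hi) + Eseq (aMinus a i hi) = 2 * Eseq a := by
  have hconst : ∀ y : Fin m → ℤ, (∀ j, y j ≤ (m : ℤ)) → prodMin y (fun _ => (m : ℤ)) = y := by
    intro y hy; funext j; simp [prodMin, hy j]
  have h := key i hi a (fun _ => (m : ℤ)) rfl
  rw [hconst _ ha, hconst, hconst] at h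
  · exact h
  · intro j; simp [aMinus, Function.update_apply]; split <;> [exact ha _; exact ha _]
  · intro j; simp [aPlus, Function.update_apply]; split <;> [exact ha _; exact ha _]

/-- If `a ∈ A(m)` has a descent at `i` but `b, c ∈ A(m)` do not, then
`E₃(a⁺,b,c) + E₃(a⁻,b,c) = 2E₃(a,b,c)`. -/
theorem stmt_2 (m : ℕ) (hm : 1 ≤ m) (i : ℕ) (hi : i + 1 < m)
    (a b c : Fin m → ℤ) (ha : memA m a) (hb : memA m b) (hc : memA m c)
    (hdes : a ⟨i + 1, hi⟩ < a ⟨i, by omega⟩)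
    (hnodesb : b ⟨i, by omega⟩ = b ⟨i + 1, hi⟩)
    (hnodesc : c ⟨i, by omega⟩ = c ⟨i + 1, hi⟩) :
    E3seq (aPlus a i hi) b c + E3seq (aMinus a i hi) b c = 2 * E3seq a b c := by
  have h1 := keyE i hi a ha.2.1
  have h2 := key i hi a (prodMin b c) (by simp [prodMin, hnodesb, hnodesc])
  have h3 := key i hi a c hnodesc
  have h4 := key i hi a b hnodesb
  simp only [E3seq]
  linear_combination 2 * h2 + (Eseq b * Eseq c - Eseq (prodMin b c)) * h1
    - Eseq b * h3 - Eseq c * h4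
end

section
/- Let X = [0,1] with Lebesgue measure, let 0 ≤ a_1 ≤ a_2 ≤ ⋯ ≤ a_n ≤ 1, and let f^i be the characteristic function of [0, a_i]. Then E_n(f^1, …, f^n) = a_1 (1 − a_2)(2 − a_3) ⋯ (n−1 − a_n). -/
open MeasureTheory

/-- The orbits (cycles, counting fixed points as 1-cycles) of a permutation `σ`
of a finite index type, as a finset of finsets. -/
def permOrbits {ι : Type*} [Fintype ι] [DecidableEq ι] (σ : Equiv.Perm ι) : Finset (Finset ι) :=
  Finset.univ.image fun x => Finset.univ.filter fun y => σ.SameCycle x y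

/-- `E_σ(f¹,…,fⁿ) = ∏_{O orbit of σ} E(∏_{i ∈ O} fⁱ)`, the expectation being the
integral with respect to `μ`. -/
noncomputable def permE {Ω : Type*} [MeasurableSpace Ω] (μ : Measure Ω)
    {ι : Type*} [Fintype ι] [DecidableEq ι] (f : ι → Ω → ℝ) (σ : Equiv.Perm ι) : ℝ :=
  ∏ O ∈ permOrbits σ, ∫ ω, (∏ i ∈ O, f i ω) ∂μ

/-- Sahi's functional `E_n(f¹,…,fⁿ) = ∑_{σ ∈ S_n} (−1)^{C_σ − 1} E_σ(f¹,…,fⁿ)`,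
where `C_σ` is the number of orbits of `σ`. -/
noncomputable def En {Ω : Type*} [MeasurableSpace Ω] (μ : Measure Ω)
    {ι : Type*} [Fintype ι] [DecidableEq ι] (f : ι → Ω → ℝ) : ℝ :=
  ∑ σ : Equiv.Perm ι, (-1 : ℝ) ^ ((permOrbits σ).card - 1) * permE μ f σ

section Aux

open Equiv Equiv.Perm Finset

variable {ι : Type*} [Fintype ι] [DecidableEq ι]

def orbitOf (σ : Perm ι) (x : ι) : Finset ι := Finset.univ.filter fun y => σ.SameCycle x y

lemma mem_orbitOf {σ : Perm ι} {x y : ι} : y ∈ orbitOf σ x ↔ σ.SameCycle x y := by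
  simp [orbitOf]

lemma self_mem_orbitOf (σ : Perm ι) (x : ι) : x ∈ orbitOf σ x := mem_orbitOf.2 (SameCycle.refl _ _)

lemma orbitOf_nonempty (σ : Perm ι) (x : ι) : (orbitOf σ x).Nonempty := ⟨x, self_mem_orbitOf σ x⟩

lemma orbitOf_eq_of_sameCycle {σ : Perm ι} {x y : ι} (h : σ.SameCycle x y) :
    orbitOf σ x = orbitOf σ y := by
  ext z
  simp only [mem_orbitOf]
  exact ⟨fun hz => h.symm.trans hz, fun hz => h.trans hz⟩

lemma mem_permOrbits {σ : Perm ι} {O : Finset ι} :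
    O ∈ permOrbits σ ↔ ∃ x, O = orbitOf σ x := by
  simp [permOrbits, orbitOf, eq_comm]

lemma nonempty_of_mem_permOrbits {σ : Perm ι} {O : Finset ι} (h : O ∈ permOrbits σ) :
    O.Nonempty := by
  obtain ⟨x, rfl⟩ := mem_permOrbits.1 h
  exact orbitOf_nonempty σ x

lemma permOrbits_card_pos [Nonempty ι] (σ : Perm ι) : 0 < (permOrbits σ).card :=
  Finset.card_pos.mpr ⟨orbitOf σ (Classical.arbitrary ι), mem_permOrbits.2 ⟨_, rfl⟩⟩

lemma orbitOf_conj (r σ : Perm ι) (x : ι) :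
    orbitOf (r * σ * r⁻¹) (r x) = (orbitOf σ x).image r := by
  ext y
  simp only [mem_orbitOf, Finset.mem_image, sameCycle_conj]
  constructor
  · intro h
    exact ⟨r⁻¹ y, by simpa using h, by simp⟩
  · rintro ⟨z, hz, rfl⟩
    simpa using hz

lemma permOrbits_conj (r σ : Perm ι) :
    permOrbits (r * σ * r⁻¹) = (permOrbits σ).image (Finset.image r) := by
  ext O
  simp only [mem_permOrbits, Finset.mem_image]
  constructor
  · rintro ⟨x, rfl⟩
    exact ⟨orbitOf σ (r⁻¹ x), ⟨_, rfl⟩, by rw [← orbitOf_conj]; simp⟩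
  · rintro ⟨O', ⟨z, rfl⟩, rfl⟩
    exact ⟨r z, (orbitOf_conj r σ z).symm⟩

section Decompose
variable {n : ℕ}

/-- Abbreviation for the inverse of `decomposeFin`. -/
def dF (p : Fin (n + 1)) (e : Perm (Fin n)) : Perm (Fin (n + 1)) :=
  Equiv.Perm.decomposeFin.symm (p, e)

lemma dF_zero (p : Fin (n + 1)) (e : Perm (Fin n)) : dF p e 0 = p :=
  Equiv.Perm.decomposeFin_symm_apply_zero p e

lemma dF_succ (p : Fin (n + 1)) (e : Perm (Fin n)) (x : Fin n) :
    dF p e x.succ = Equiv.swap 0 p (e x).succ :=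
  Equiv.Perm.decomposeFin_symm_apply_succ e p x

lemma sameCycle_dF_step (p : Fin (n + 1)) (e : Perm (Fin n)) (x : Fin n) :
    (dF p e).SameCycle x.succ (e x).succ := by
  by_cases h : (e x).succ = p
  · have h1 : dF p e x.succ = 0 := by rw [dF_succ, h, Equiv.swap_apply_right]
    have h2 : dF p e 0 = (e x).succ := by rw [dF_zero, h]
    exact SameCycle.trans ⟨1, by simpa using h1⟩ ⟨1, by simpa using h2⟩
  · have h1 : dF p e x.succ = (e x).succ := by
      rw [dF_succ, Equiv.swap_apply_of_ne_of_ne (Fin.succ_ne_zero _) h]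
    exact ⟨1, by simpa using h1⟩

lemma sameCycle_succ_of (p : Fin (n + 1)) (e : Perm (Fin n)) {x y : Fin n}
    (h : e.SameCycle x y) : (dF p e).SameCycle x.succ y.succ := by
  obtain ⟨k, -, rfl⟩ := h.exists_pow_eq'
  clear h
  induction k with
  | zero => simpa using SameCycle.refl _ _
  | succ k ih =>
    have h2 : (e ^ (k + 1)) x = e ((e ^ k) x) := by
      rw [pow_succ', Perm.mul_apply]
    rw [h2]
    exact ih.trans (sameCycle_dF_step p e ((e ^ k) x))

lemma sameCycle_of_succ (p : Fin (n + 1)) (e : Perm (Fin n)) :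
    ∀ k : ℕ, ∀ x y : Fin n, ((dF p e) ^ k) x.succ = y.succ → e.SameCycle x y := by
  intro k
  induction k using Nat.strong_induction_on with
  | _ k ih =>
    intro x y hk
    match k with
    | 0 =>
      simp only [pow_zero, Perm.coe_one, id_eq] at hk
      exact (Fin.succ_injective _ hk ▸ SameCycle.refl e x)
    | (k + 1) =>
      have hstep : ((dF p e) ^ (k + 1)) x.succ = ((dF p e) ^ k) (dF p e x.succ) := by
        rw [pow_succ, Perm.mul_apply]
      by_cases h : (e x).succ = p
      · have h1 : dF p e x.succ = 0 := by rw [dF_succ, h, Equiv.swap_apply_right]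
        rw [hstep, h1] at hk
        match k with
        | 0 => exact absurd hk.symm (Fin.succ_ne_zero y)
        | (k + 1) =>
          have h2 : ((dF p e) ^ (k + 1)) 0 = ((dF p e) ^ k) ((e x).succ) := by
            rw [pow_succ, Perm.mul_apply, dF_zero, h]
          rw [h2] at hk
          have := ih k (by omega) (e x) y hk
          exact (Equiv.Perm.sameCycle_apply_left).1 this
      · have h1 : dF p e x.succ = (e x).succ := by
          rw [dF_succ, Equiv.swap_apply_of_ne_of_ne (Fin.succ_ne_zero _) h]
        rw [hstep, h1] at hk
        have := ih k (by omega) (e x) y hk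
        exact (Equiv.Perm.sameCycle_apply_left).1 this

lemma sameCycle_succ_iff (p : Fin (n + 1)) (e : Perm (Fin n)) {x y : Fin n} :
    (dF p e).SameCycle x.succ y.succ ↔ e.SameCycle x y := by
  constructor
  · intro h
    obtain ⟨k, -, hk⟩ := h.exists_pow_eq'
    exact sameCycle_of_succ p e k x y hk
  · exact sameCycle_succ_of p e

lemma sameCycle_zero_dF_zero (e : Perm (Fin n)) {y : Fin (n + 1)} :
    (dF 0 e).SameCycle 0 y ↔ y = 0 := by
  constructor
  · rintro ⟨k, rfl⟩
    have : Function.IsFixedPt (dF (0 : Fin (n+1)) e) 0 := by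
      simp [Function.IsFixedPt, dF_zero]
    exact this.perm_zpow k
  · rintro rfl
    exact SameCycle.refl _ _

lemma sameCycle_zero_dF_succ (q : Fin n) (e : Perm (Fin n)) {y : Fin n} :
    (dF q.succ e).SameCycle 0 y.succ ↔ e.SameCycle q y := by
  have hzq : (dF q.succ e).SameCycle 0 q.succ := ⟨1, by simp [dF_zero]⟩
  constructor
  · intro h
    exact (sameCycle_succ_iff q.succ e).1 (hzq.symm.trans h)
  · intro h
    exact hzq.trans ((sameCycle_succ_iff q.succ e).2 h)

end Decompose

section Orbits
variable {n : ℕ}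

lemma orbitOf_dF_zero_zero (e : Perm (Fin n)) : orbitOf (dF 0 e) 0 = {0} := by
  ext y
  simp only [mem_orbitOf, Finset.mem_singleton, sameCycle_zero_dF_zero]

lemma orbitOf_dF_zero_succ (e : Perm (Fin n)) (z : Fin n) :
    orbitOf (dF 0 e) z.succ = (orbitOf e z).image Fin.succ := by
  ext y
  refine Fin.cases ?_ ?_ y
  · simp only [mem_orbitOf, Finset.mem_image]
    constructor
    · intro h
      exact absurd ((sameCycle_zero_dF_zero e).1 h.symm) (Fin.succ_ne_zero z)
    · rintro ⟨w, -, hw⟩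
      exact absurd hw (Fin.succ_ne_zero w)
  · intro w
    simp only [mem_orbitOf, Finset.mem_image, sameCycle_succ_iff]
    constructor
    · intro h
      exact ⟨w, h, rfl⟩
    · rintro ⟨v, hv, hvw⟩
      rw [← Fin.succ_injective _ hvw]
      exact hv

lemma permOrbits_dF_zero (e : Perm (Fin n)) :
    permOrbits (dF 0 e) =
      insert {0} ((permOrbits e).image (Finset.image Fin.succ)) := by
  ext O
  simp only [mem_permOrbits, Finset.mem_insert, Finset.mem_image]
  constructor
  · rintro ⟨x, rfl⟩
    refine Fin.cases ?_ ?_ x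
    · exact Or.inl (orbitOf_dF_zero_zero e)
    · intro z
      exact Or.inr ⟨orbitOf e z, ⟨z, rfl⟩, (orbitOf_dF_zero_succ e z).symm⟩
  · rintro (rfl | ⟨O', ⟨z, rfl⟩, rfl⟩)
    · exact ⟨0, (orbitOf_dF_zero_zero e).symm⟩
    · exact ⟨z.succ, (orbitOf_dF_zero_succ e z).symm⟩

/-- Insert `0` into the shifted orbit if it meets `q`. -/
def dfPhi (q : Fin n) (O : Finset (Fin n)) : Finset (Fin (n + 1)) :=
  if q ∈ O then insert 0 (O.image Fin.succ) else O.image Fin.succ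

lemma zero_mem_dfPhi_iff (q : Fin n) (O : Finset (Fin n)) :
    (0 : Fin (n + 1)) ∈ dfPhi q O ↔ q ∈ O := by
  unfold dfPhi
  split_ifs with h
  · simp [h]
  · simp only [Finset.mem_image, iff_false, h]
    rintro ⟨w, -, hw⟩
    exact absurd hw (Fin.succ_ne_zero w)

lemma succ_mem_dfPhi_iff (q : Fin n) (O : Finset (Fin n)) (w : Fin n) :
    w.succ ∈ dfPhi q O ↔ w ∈ O := by
  have himg : w.succ ∈ O.image Fin.succ ↔ w ∈ O := by
    simp only [Finset.mem_image]
    exact ⟨fun ⟨v, hv, hvw⟩ => Fin.succ_injective _ hvw ▸ hv, fun h => ⟨w, h, rfl⟩⟩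
  unfold dfPhi
  split_ifs with h
  · rw [Finset.mem_insert, himg]
    simp [Fin.succ_ne_zero w]
  · exact himg

lemma orbitOf_dF_succ (e : Perm (Fin n)) (q z : Fin n) :
    orbitOf (dF q.succ e) z.succ = dfPhi q (orbitOf e z) := by
  ext y
  refine Fin.cases ?_ ?_ y
  · rw [zero_mem_dfPhi_iff, mem_orbitOf, mem_orbitOf]
    constructor
    · intro h
      exact ((sameCycle_zero_dF_succ q e).1 h.symm).symm
    · intro h
      exact ((sameCycle_zero_dF_succ q e).2 h.symm).symm
  · intro w
    rw [succ_mem_dfPhi_iff, mem_orbitOf, mem_orbitOf, sameCycle_succ_iff]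

lemma permOrbits_dF_succ (e : Perm (Fin n)) (q : Fin n) :
    permOrbits (dF q.succ e) = (permOrbits e).image (dfPhi q) := by
  ext O
  simp only [mem_permOrbits, Finset.mem_image]
  constructor
  · rintro ⟨x, rfl⟩
    refine Fin.cases ?_ ?_ x
    · refine ⟨orbitOf e q, ⟨q, rfl⟩, ?_⟩
      rw [← orbitOf_dF_succ]
      exact (orbitOf_eq_of_sameCycle ⟨1, by simp [dF_zero]⟩).symm
    · intro z
      exact ⟨orbitOf e z, ⟨z, rfl⟩, (orbitOf_dF_succ e q z).symm⟩
  · rintro ⟨O', ⟨z, rfl⟩, rfl⟩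
    exact ⟨z.succ, (orbitOf_dF_succ e q z).symm⟩

lemma image_succ_injective :
    Function.Injective (Finset.image (Fin.succ : Fin n → Fin (n + 1))) :=
  Finset.image_injective (Fin.succ_injective n)

lemma dfPhi_injective (q : Fin n) : Function.Injective (dfPhi q) := by
  intro O₁ O₂ h
  have h0 : q ∈ O₁ ↔ q ∈ O₂ := by
    rw [← zero_mem_dfPhi_iff, ← zero_mem_dfPhi_iff (O := O₂), h]
  have hsucc : ∀ w : Fin n, w ∈ O₁ ↔ w ∈ O₂ := by
    intro w
    rw [← succ_mem_dfPhi_iff q O₁, ← succ_mem_dfPhi_iff q O₂, h]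
  exact Finset.ext hsucc

lemma singleton_zero_not_mem_image_succ (S : Finset (Finset (Fin n))) :
    ({0} : Finset (Fin (n + 1))) ∉ S.image (Finset.image Fin.succ) := by
  simp only [Finset.mem_image]
  rintro ⟨O, -, hO⟩
  have : (0 : Fin (n + 1)) ∈ Finset.image Fin.succ O := hO ▸ Finset.mem_singleton_self 0
  obtain ⟨w, -, hw⟩ := Finset.mem_image.1 this
  exact absurd hw (Fin.succ_ne_zero w)

lemma card_permOrbits_dF_zero (e : Perm (Fin n)) :
    (permOrbits (dF 0 e)).card = (permOrbits e).card + 1 := by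
  rw [permOrbits_dF_zero, Finset.card_insert_of_notMem (singleton_zero_not_mem_image_succ _),
    Finset.card_image_of_injective _ image_succ_injective]

lemma card_permOrbits_dF_succ (e : Perm (Fin n)) (q : Fin n) :
    (permOrbits (dF q.succ e)).card = (permOrbits e).card := by
  rw [permOrbits_dF_succ, Finset.card_image_of_injective _ (dfPhi_injective q)]

end Orbits

section Weights
variable {m : ℕ}

noncomputable def wtmax (b : Fin m → ℝ) (O : Finset (Fin m)) : ℝ :=
  if h : O.Nonempty then b (O.max' h) else 1

noncomputable def wtmin (b : Fin m → ℝ) (O : Finset (Fin m)) : ℝ :=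
  if h : O.Nonempty then b (O.min' h) else 1

lemma wtmax_singleton (b : Fin m → ℝ) (x : Fin m) : wtmax b {x} = b x := by
  rw [wtmax, dif_pos (Finset.singleton_nonempty x)]
  simp

lemma monotone_succ {k : ℕ} : Monotone (Fin.succ : Fin k → Fin (k + 1)) :=
  fun a b h => by simpa [Fin.succ_le_succ_iff] using h

lemma wtmax_image_succ {k : ℕ} (b : Fin (k + 1) → ℝ) (O : Finset (Fin k)) :
    wtmax b (O.image Fin.succ) = wtmax (b ∘ Fin.succ) O := by
  rcases O.eq_empty_or_nonempty with rfl | h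
  · simp [wtmax]
  · rw [wtmax, wtmax, dif_pos (h.image _), dif_pos h]
    refine congrArg b (le_antisymm (Finset.max'_le _ _ _ ?_) (Finset.le_max' _ _ ?_))
    · rintro y hy
      obtain ⟨z, hz, rfl⟩ := Finset.mem_image.1 hy
      exact monotone_succ (Finset.le_max' _ _ hz)
    · exact Finset.mem_image_of_mem _ (O.max'_mem h)

lemma wtmax_insert_zero {k : ℕ} (b : Fin (k + 1) → ℝ) (O : Finset (Fin (k + 1)))
    (h : O.Nonempty) : wtmax b (insert 0 O) = wtmax b O := by
  rw [wtmax, wtmax, dif_pos (O.insert_nonempty 0), dif_pos h]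
  refine congrArg b (le_antisymm (Finset.max'_le _ _ _ ?_) (Finset.le_max' _ _ ?_))
  · rintro y hy
    rcases Finset.mem_insert.1 hy with rfl | hy
    · exact Fin.zero_le _
    · exact Finset.le_max' _ _ hy
  · exact Finset.mem_insert_of_mem (O.max'_mem h)

lemma wtmax_dfPhi {k : ℕ} (b : Fin (k + 1) → ℝ) (q : Fin k) (O : Finset (Fin k)) :
    wtmax b (dfPhi q O) = wtmax (b ∘ Fin.succ) O := by
  unfold dfPhi
  split_ifs with hq
  · rw [wtmax_insert_zero b _ (Finset.Nonempty.image ⟨q, hq⟩ _), wtmax_image_succ]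
  · exact wtmax_image_succ b O

noncomputable def Wmax (b : Fin m → ℝ) (σ : Perm (Fin m)) : ℝ :=
  ∏ O ∈ permOrbits σ, wtmax b O

lemma Wmax_dF_zero {k : ℕ} (b : Fin (k + 1) → ℝ) (e : Perm (Fin k)) :
    Wmax b (dF 0 e) = b 0 * Wmax (b ∘ Fin.succ) e := by
  rw [Wmax, permOrbits_dF_zero,
    Finset.prod_insert (singleton_zero_not_mem_image_succ _),
    Finset.prod_image (fun x _ y _ h => image_succ_injective h), wtmax_singleton]
  congr 1
  exact Finset.prod_congr rfl fun O _ => wtmax_image_succ b O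

lemma Wmax_dF_succ {k : ℕ} (b : Fin (k + 1) → ℝ) (e : Perm (Fin k)) (q : Fin k) :
    Wmax b (dF q.succ e) = Wmax (b ∘ Fin.succ) e := by
  rw [Wmax, permOrbits_dF_succ,
    Finset.prod_image (fun x _ y _ h => dfPhi_injective q h)]
  exact Finset.prod_congr rfl fun O _ => wtmax_dfPhi b q O

end Weights

lemma Hsum : ∀ (n : ℕ) (b : Fin (n + 1) → ℝ),
    ∑ σ : Perm (Fin (n + 1)), (-1 : ℝ) ^ ((permOrbits σ).card - 1) * Wmax b σ
      = b (Fin.last n) *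
        ∏ i ∈ Finset.univ.erase (Fin.last n), ((n : ℝ) - (i : Fin (n + 1)).val - b i) := by
  intro n
  induction n with
  | zero =>
    intro b
    have huniv : (Finset.univ : Finset (Fin 1)) = {0} := rfl
    have herase : (Finset.univ : Finset (Fin 1)).erase (Fin.last 0) = ∅ := rfl
    have hterm : ∀ σ : Perm (Fin 1),
        (-1 : ℝ) ^ ((permOrbits σ).card - 1) * Wmax b σ = b 0 := by
      intro σ
      have h1 : permOrbits σ = {({0} : Finset (Fin 1))} := by
        ext O
        simp only [mem_permOrbits, Finset.mem_singleton]
        constructor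
        · rintro ⟨x, rfl⟩
          ext y
          simp [mem_orbitOf, Subsingleton.elim y x, Subsingleton.elim x 0,
            Equiv.Perm.SameCycle.refl]
        · rintro rfl
          exact ⟨0, by ext y; simp [mem_orbitOf, Subsingleton.elim y (0 : Fin 1),
            Equiv.Perm.SameCycle.refl]⟩
      rw [h1, Wmax, h1]
      simp [wtmax_singleton]
    rw [Finset.sum_congr rfl (fun σ _ => hterm σ), Finset.sum_const, herase]
    simp [Finset.card_univ, Fintype.card_perm]
  | succ n IH =>
    intro b
    have hre := Equiv.sum_comp (Equiv.Perm.decomposeFin.symm)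
      (fun σ : Perm (Fin (n + 2)) => (-1 : ℝ) ^ ((permOrbits σ).card - 1) * Wmax b σ)
    rw [← hre, Fintype.sum_prod_type, Fin.sum_univ_succ]
    have hdF : ∀ (p : Fin (n + 2)) (e : Perm (Fin (n + 1))),
        Equiv.Perm.decomposeFin.symm (p, e) = dF p e := fun _ _ => rfl
    set H : ℝ := ∑ e : Perm (Fin (n + 1)),
      (-1 : ℝ) ^ ((permOrbits e).card - 1) * Wmax (b ∘ Fin.succ) e with hH
    have h0term : ∑ e : Perm (Fin (n + 1)),
        (-1 : ℝ) ^ ((permOrbits (Equiv.Perm.decomposeFin.symm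
          ((0 : Fin (n + 2)), e))).card - 1) *
          Wmax b (Equiv.Perm.decomposeFin.symm (0, e)) = -(b 0) * H := by
      rw [hH, Finset.mul_sum]
      refine Finset.sum_congr rfl fun e _ => ?_
      rw [hdF, card_permOrbits_dF_zero, Wmax_dF_zero, Nat.add_sub_cancel]
      have hpow : (-1 : ℝ) ^ (permOrbits e).card
          = -(-1 : ℝ) ^ ((permOrbits e).card - 1) := by
        conv_lhs => rw [← Nat.succ_pred_eq_of_pos (permOrbits_card_pos e)]
        rw [pow_succ, Nat.pred_eq_sub_one]
        ring
      rw [hpow]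
      ring
    have hqterm : ∀ q : Fin (n + 1), ∑ e : Perm (Fin (n + 1)),
        (-1 : ℝ) ^ ((permOrbits (Equiv.Perm.decomposeFin.symm (q.succ, e))).card - 1) *
          Wmax b (Equiv.Perm.decomposeFin.symm (q.succ, e)) = H := by
      intro q
      refine Finset.sum_congr rfl fun e _ => ?_
      rw [hdF, card_permOrbits_dF_succ, Wmax_dF_succ]
    rw [h0term, Finset.sum_congr rfl (fun q _ => hqterm q), Finset.sum_const,
      Finset.card_univ, Fintype.card_fin, nsmul_eq_mul]
    -- Now compute the right-hand side.
    have herase : (Finset.univ : Finset (Fin (n + 2))).erase (Fin.last (n + 1))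
        = insert 0 (((Finset.univ : Finset (Fin (n + 1))).erase (Fin.last n)).image
            Fin.succ) := by
      ext i
      simp only [Finset.mem_erase, Finset.mem_univ, and_true, Finset.mem_insert,
        Finset.mem_image]
      constructor
      · refine Fin.cases (fun _ => Or.inl rfl) (fun j hj => Or.inr ⟨j, fun hcon => hj ?_, rfl⟩) i
        rw [hcon, Fin.succ_last]
      · rintro (rfl | ⟨j, hj, rfl⟩)
        · exact (Fin.last_pos).ne
        · intro hcon
          exact hj (Fin.succ_injective _ (hcon.trans (Fin.succ_last n).symm))
    have hzero_notmem : (0 : Fin (n + 2)) ∉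
        ((Finset.univ : Finset (Fin (n + 1))).erase (Fin.last n)).image Fin.succ := by
      simp only [Finset.mem_image]
      rintro ⟨j, -, hj⟩
      exact absurd hj (Fin.succ_ne_zero j)
    rw [herase, Finset.prod_insert hzero_notmem,
      Finset.prod_image (fun x _ y _ h => Fin.succ_injective _ h)]
    have hfac : ∀ j : Fin (n + 1),
        ((n + 1 : ℕ) : ℝ) - ((j.succ : Fin (n + 2)) : ℕ) - b j.succ
          = (n : ℝ) - (j : ℕ) - (b ∘ Fin.succ) j := by
      intro j
      rw [Fin.val_succ]
      simp only [Function.comp_apply]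
      push_cast
      ring
    have hlast : b (Fin.last (n + 1)) = (b ∘ Fin.succ) (Fin.last n) := by
      rw [Function.comp_apply, Fin.succ_last]
    rw [Finset.prod_congr rfl (fun j _ => hfac j), hH, IH (b ∘ Fin.succ), hlast]
    simp only [Fin.val_zero, Nat.cast_zero]
    push_cast
    ring

section Rev
variable {m : ℕ}

lemma min'_image_rev (O : Finset (Fin m)) (h : O.Nonempty) :
    (O.image Fin.rev).min' (h.image _) = (O.max' h).rev := by
  refine le_antisymm (Finset.min'_le _ _ (Finset.mem_image_of_mem _ (O.max'_mem h)))
    (Finset.le_min' _ _ _ ?_)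
  rintro y hy
  obtain ⟨z, hz, rfl⟩ := Finset.mem_image.1 hy
  exact Fin.rev_le_rev.2 (Finset.le_max' _ _ hz)

lemma wtmin_image_rev (a : Fin m → ℝ) (O : Finset (Fin m)) :
    wtmin a (O.image Fin.rev) = wtmax (a ∘ Fin.rev) O := by
  rcases O.eq_empty_or_nonempty with rfl | h
  · simp [wtmin, wtmax]
  · rw [wtmin, wtmax, dif_pos (h.image _), dif_pos h]
    exact congrArg a (min'_image_rev O h)

end Rev

lemma Gsum (n : ℕ) (a : Fin (n + 1) → ℝ) :
    ∑ σ : Perm (Fin (n + 1)), (-1 : ℝ) ^ ((permOrbits σ).card - 1) *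
        ∏ O ∈ permOrbits σ, wtmin a O
      = a 0 * ∏ i ∈ Finset.univ.erase (0 : Fin (n + 1)), ((i.val : ℝ) - a i) := by
  classical
  set r : Perm (Fin (n + 1)) := Fin.revPerm with hr
  have hconj := Equiv.sum_comp ((Equiv.mulLeft r).trans (Equiv.mulRight r⁻¹))
    (fun σ : Perm (Fin (n + 1)) => (-1 : ℝ) ^ ((permOrbits σ).card - 1) *
      ∏ O ∈ permOrbits σ, wtmin a O)
  rw [← hconj]
  have hterm : ∀ σ : Perm (Fin (n + 1)),
      (-1 : ℝ) ^ ((permOrbits (((Equiv.mulLeft r).trans (Equiv.mulRight r⁻¹)) σ)).card - 1) *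
        ∏ O ∈ permOrbits (((Equiv.mulLeft r).trans (Equiv.mulRight r⁻¹)) σ), wtmin a O
      = (-1 : ℝ) ^ ((permOrbits σ).card - 1) * Wmax (a ∘ Fin.rev) σ := by
    intro σ
    have h1 : ((Equiv.mulLeft r).trans (Equiv.mulRight r⁻¹)) σ = r * σ * r⁻¹ := rfl
    rw [h1, permOrbits_conj,
      Finset.card_image_of_injective _ (Finset.image_injective r.injective),
      Finset.prod_image (fun x _ y _ h => Finset.image_injective r.injective h)]
    congr 1
    refine Finset.prod_congr rfl fun O _ => ?_
    have h2 : Finset.image (⇑r) O = Finset.image Fin.rev O := rfl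
    rw [h2, wtmin_image_rev]
  rw [Finset.sum_congr rfl fun σ _ => hterm σ, Hsum n (a ∘ Fin.rev)]
  have h0 : (a ∘ Fin.rev) (Fin.last n) = a 0 := by
    rw [Function.comp_apply, Fin.rev_last]
  have himage : ((Finset.univ : Finset (Fin (n + 1))).erase 0).image Fin.rev
      = Finset.univ.erase (Fin.last n) := by
    ext i
    simp only [Finset.mem_image, Finset.mem_erase, Finset.mem_univ, and_true]
    constructor
    · rintro ⟨j, hj, rfl⟩
      intro hcon
      exact hj (by rw [← Fin.rev_rev j, hcon, Fin.rev_last])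
    · intro hi
      refine ⟨Fin.rev i, fun hcon => hi ?_, Fin.rev_rev i⟩
      rw [← Fin.rev_rev i, hcon, Fin.rev_zero]
  rw [h0, ← himage, Finset.prod_image (fun x _ y _ h => Fin.rev_injective h)]
  congr 1
  refine Finset.prod_congr rfl fun j hj => ?_
  simp only [Function.comp_apply]
  have hv : (Fin.rev j).val = n - j.val := by
    rw [Fin.val_rev]
    omega
  rw [Fin.rev_rev, hv, Nat.cast_sub (Fin.is_le j)]
  ring

open MeasureTheory in
lemma integral_prod_indicator {m : ℕ} (a : Fin m → ℝ)
    (ha0 : ∀ i, 0 ≤ a i) (ha1 : ∀ i, a i ≤ 1) (hmono : Monotone a)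
    (f : Fin m → ℝ → ℝ)
    (hf : ∀ i, f i = Set.indicator (Set.Icc (0 : ℝ) (a i)) fun _ => (1 : ℝ))
    (O : Finset (Fin m)) (hO : O.Nonempty) :
    ∫ ω, (∏ i ∈ O, f i ω) ∂(volume.restrict (Set.Icc (0 : ℝ) 1))
      = a (O.min' hO) := by
  have hfun : (fun ω => ∏ i ∈ O, f i ω)
      = Set.indicator (Set.Icc (0 : ℝ) (a (O.min' hO))) fun _ => (1 : ℝ) := by
    funext ω
    by_cases hω : ω ∈ Set.Icc (0 : ℝ) (a (O.min' hO))
    · rw [Set.indicator_of_mem hω]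
      refine Finset.prod_eq_one fun i hi => ?_
      have hωi : ω ∈ Set.Icc (0 : ℝ) (a i) :=
        Set.mem_Icc.mpr ⟨(Set.mem_Icc.mp hω).1,
          (Set.mem_Icc.mp hω).2.trans (hmono (O.min'_le i hi))⟩
      rw [hf i, Set.indicator_of_mem hωi]
    · rw [Set.indicator_of_notMem hω]
      refine Finset.prod_eq_zero (O.min'_mem hO) ?_
      rw [hf (O.min' hO), Set.indicator_of_notMem hω]
  rw [hfun, MeasureTheory.integral_indicator_const (1 : ℝ) measurableSet_Icc, measureReal_def,
    Measure.restrict_apply measurableSet_Icc, Set.Icc_inter_Icc]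
  have h1 : max (0 : ℝ) 0 = 0 := by norm_num
  have h2 : min (a (O.min' hO)) 1 = a (O.min' hO) := min_eq_left (ha1 _)
  rw [h1, h2, Real.volume_Icc, smul_eq_mul, mul_one, sub_zero,
    ENNReal.toReal_ofReal (ha0 _)]

lemma wtmin_eq {m : ℕ} (a : Fin m → ℝ) {O : Finset (Fin m)} (h : O.Nonempty) :
    wtmin a O = a (O.min' h) := by
  rw [wtmin, dif_pos h]

end Aux

/-- On `X = [0,1]` with Lebesgue measure, if `fⁱ` is the characteristic
function of `[0, aᵢ]` with `0 ≤ a₁ ≤ ⋯ ≤ aₙ ≤ 1`, then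
`E_n(f¹,…,fⁿ) = a₁(1 − a₂)(2 − a₃)⋯(n−1 − aₙ)`. -/
theorem stmt_6 (n : ℕ) (hn : 0 < n) (a : Fin n → ℝ)
    (ha0 : ∀ i, 0 ≤ a i) (ha1 : ∀ i, a i ≤ 1) (hmono : Monotone a)
    (f : Fin n → ℝ → ℝ)
    (hf : ∀ i, f i = Set.indicator (Set.Icc (0 : ℝ) (a i)) fun _ => (1 : ℝ)) :
    En (volume.restrict (Set.Icc (0 : ℝ) 1)) f
      = a ⟨0, hn⟩ * ∏ i ∈ Finset.univ.erase ⟨0, hn⟩, ((i.val : ℝ) - a i) := by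
  obtain ⟨m, rfl⟩ : ∃ m, n = m + 1 := ⟨n - 1, by omega⟩
  have h00 : (⟨0, hn⟩ : Fin (m + 1)) = 0 := rfl
  rw [h00, En]
  have hterm : ∀ σ : Equiv.Perm (Fin (m + 1)),
      (-1 : ℝ) ^ ((permOrbits σ).card - 1) *
          permE (volume.restrict (Set.Icc (0 : ℝ) 1)) f σ
        = (-1 : ℝ) ^ ((permOrbits σ).card - 1) * ∏ O ∈ permOrbits σ, wtmin a O := by
    intro σ
    congr 1
    rw [permE]
    refine Finset.prod_congr rfl fun O hO => ?_
    have hne := nonempty_of_mem_permOrbits hO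
    rw [integral_prod_indicator a ha0 ha1 hmono f hf O hne, wtmin_eq a hne]
  rw [Finset.sum_congr rfl fun σ _ => hterm σ, Gsum m a]
end

section
/- For bounded measurable functions f^1, …, f^{n−1}, f on a probability space (n ≥ 2), E_n(f^1, …, f^{n−1}, f) = Σ_{i=1}^{n−1} E_{n−1}(f^1, …, f^i f, …, f^{n−1}) − E_{n−1}(f^1, …, f^{n−1}) E(f), where in the i-th summand the i-th argument f^i is replaced by the pointwise product f^i f. -/
open MeasureTheory

namespace Stmt7Aux

open Equiv Finset Fin

variable {n : ℕ}

/-- The orbit of a point as a finset. -/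
def orb {ι : Type*} [Fintype ι] [DecidableEq ι] (σ : Equiv.Perm ι) (x : ι) : Finset ι :=
  Finset.univ.filter fun y => σ.SameCycle x y

@[simp] lemma castSuccEmb_apply (x : Fin n) : Fin.castSuccEmb x = x.castSucc := rfl

lemma mem_orb {ι : Type*} [Fintype ι] [DecidableEq ι] {σ : Equiv.Perm ι} {x y : ι} :
    y ∈ orb σ x ↔ σ.SameCycle x y := by simp [orb]

lemma permOrbits_eq {ι : Type*} [Fintype ι] [DecidableEq ι] (σ : Equiv.Perm ι) :
    permOrbits σ = Finset.univ.image (orb σ) := rfl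

/-- Extension of a permutation of `Fin n` to `Fin (n+1)` fixing `last n`. -/
def extPerm (τ : Equiv.Perm (Fin n)) : Equiv.Perm (Fin (n + 1)) where
  toFun := Fin.lastCases (Fin.last n) (fun x => (τ x).castSucc)
  invFun := Fin.lastCases (Fin.last n) (fun x => (τ.symm x).castSucc)
  left_inv := by
    intro a
    induction a using Fin.lastCases with
    | last => simp
    | cast x => simp
  right_inv := by
    intro a
    induction a using Fin.lastCases with
    | last => simp
    | cast x => simp

@[simp] lemma extPerm_castSucc (τ : Equiv.Perm (Fin n)) (x : Fin n) :
    extPerm τ x.castSucc = (τ x).castSucc := by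
  simp [extPerm, Equiv.coe_fn_mk]

@[simp] lemma extPerm_last (τ : Equiv.Perm (Fin n)) :
    extPerm τ (Fin.last n) = Fin.last n := by
  simp [extPerm, Equiv.coe_fn_mk]

/-- Insertion map: `ins p τ` is the permutation of `Fin (n+1)` sending `last` to `p`
and acting like `τ` elsewhere (with `last` spliced into the cycle). -/
def ins (p : Fin (n + 1)) (τ : Equiv.Perm (Fin n)) : Equiv.Perm (Fin (n + 1)) :=
  Equiv.swap (Fin.last n) p * extPerm τ

lemma ins_last (p : Fin (n + 1)) (τ : Equiv.Perm (Fin n)) : ins p τ (Fin.last n) = p := by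
  simp [ins, Equiv.Perm.mul_apply]

lemma ins_last_eq (τ : Equiv.Perm (Fin n)) : ins (Fin.last n) τ = extPerm τ := by
  simp [ins]; rfl

lemma ins_injective : Function.Injective (fun pt : Fin (n + 1) × Equiv.Perm (Fin n) => ins pt.1 pt.2) := by
  rintro ⟨p, τ⟩ ⟨p', τ'⟩ h
  simp only at h
  have hp : p = p' := by rw [← ins_last p τ, ← ins_last p' τ', h]
  subst hp
  have hext : extPerm τ = extPerm τ' := mul_left_cancel (h : _ * _ = _ * _)
  have hτ : τ = τ' := by
    apply Equiv.ext
    intro x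
    have := congrArg (fun e : Equiv.Perm (Fin (n+1)) => e x.castSucc) hext
    exact Fin.castSucc_injective _ (by simpa using this)
  rw [hτ]

lemma ins_bijective :
    Function.Bijective (fun pt : Fin (n + 1) × Equiv.Perm (Fin n) => ins pt.1 pt.2) := by
  rw [Fintype.bijective_iff_injective_and_card]
  refine ⟨ins_injective, ?_⟩
  simp [Fintype.card_perm, Nat.factorial_succ, mul_comm]

/-- Transfer of `SameCycle` along a map intertwined with the permutations. -/
lemma sameCycle_map {α β : Type*} [Finite α] {σ : Equiv.Perm β} {τ : Equiv.Perm α} (F : α → β)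
    (step : ∀ x, σ.SameCycle (F x) (F (τ x))) {x y : α} (h : τ.SameCycle x y) :
    σ.SameCycle (F x) (F y) := by
  obtain ⟨i, -, rfl⟩ := h.exists_pow_eq'
  clear h
  induction i with
  | zero => simpa using Equiv.Perm.SameCycle.refl σ (F x)
  | succ k ih =>
    have hh : (τ ^ (k + 1)) x = τ ((τ ^ k) x) := by
      rw [pow_succ']; rfl
    rw [hh]
    exact ih.trans (step _)

section CaseA

variable (τ : Equiv.Perm (Fin n))

lemma extPerm_pow_castSucc (k : ℕ) (x : Fin n) :
    ((extPerm τ) ^ k) x.castSucc = ((τ ^ k) x).castSucc := by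
  induction k with
  | zero => simp
  | succ m ih =>
    have h1 : ((extPerm τ) ^ (m + 1)) x.castSucc = extPerm τ (((extPerm τ) ^ m) x.castSucc) := by
      rw [pow_succ']; rfl
    have h2 : ((τ : Equiv.Perm (Fin n)) ^ (m + 1)) x = τ ((τ ^ m) x) := by
      rw [pow_succ']; rfl
    rw [h1, h2, ih, extPerm_castSucc]

lemma sameCycle_ext_iff {x y : Fin n} :
    (extPerm τ).SameCycle x.castSucc y.castSucc ↔ τ.SameCycle x y := by
  constructor
  · intro h
    have := sameCycle_map (σ := τ) (τ := extPerm τ)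
      (Fin.lastCases x (fun z => z)) ?_ h
    · simpa using this
    · intro a
      induction a using Fin.lastCases with
      | last => simpa using Equiv.Perm.SameCycle.refl τ x
      | cast z => simpa using (Equiv.Perm.sameCycle_apply_right).mpr (Equiv.Perm.SameCycle.refl τ z)
  · intro h
    refine sameCycle_map Fin.castSucc ?_ h
    intro z
    have : (extPerm τ) z.castSucc = (τ z).castSucc := extPerm_castSucc τ z
    rw [← this]
    exact (Equiv.Perm.sameCycle_apply_right).mpr (Equiv.Perm.SameCycle.refl _ _)

lemma not_sameCycle_ext_last (x : Fin n) :
    ¬ (extPerm τ).SameCycle x.castSucc (Fin.last n) := by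
  intro h
  obtain ⟨i, -, hi⟩ := h.exists_pow_eq'
  rw [extPerm_pow_castSucc] at hi
  exact absurd hi (Fin.castSucc_lt_last _).ne

lemma orbA_castSucc (x : Fin n) :
    orb (extPerm τ) x.castSucc = (orb τ x).map Fin.castSuccEmb := by
  ext a
  induction a using Fin.lastCases with
  | last =>
    simp only [mem_orb, Finset.mem_map]
    constructor
    · intro h; exact absurd h (not_sameCycle_ext_last τ x)
    · rintro ⟨b, -, hb⟩
      exact absurd hb (Fin.castSucc_lt_last _).ne
  | cast z =>
    simp only [mem_orb, Finset.mem_map, sameCycle_ext_iff]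
    constructor
    · intro h; exact ⟨z, h, rfl⟩
    · rintro ⟨b, hb, hbz⟩
      have hb' : b = z := Fin.castSucc_injective _ hbz
      subst hb'
      exact hb

lemma orbA_last : orb (extPerm τ) (Fin.last n) = {Fin.last n} := by
  ext a
  induction a using Fin.lastCases with
  | last =>
    simpa [mem_orb] using Equiv.Perm.SameCycle.refl (extPerm τ) (Fin.last n)
  | cast z =>
    simp only [mem_orb, Finset.mem_singleton]
    constructor
    · intro h; exact absurd h.symm (not_sameCycle_ext_last τ z)
    · intro h; exact absurd h (Fin.castSucc_lt_last _).ne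

lemma last_notMem_image :
    {Fin.last n} ∉ (permOrbits τ).image (fun O => O.map Fin.castSuccEmb) := by
  intro h
  obtain ⟨O, hO, hOeq⟩ := Finset.mem_image.mp h
  rw [permOrbits_eq] at hO
  obtain ⟨x, -, rfl⟩ := Finset.mem_image.mp hO
  have hx : x ∈ orb τ x := mem_orb.mpr (Equiv.Perm.SameCycle.refl _ _)
  have : x.castSucc ∈ ((orb τ x).map Fin.castSuccEmb) := Finset.mem_map_of_mem _ hx
  rw [hOeq] at this
  exact absurd (Finset.mem_singleton.mp this) (Fin.castSucc_lt_last _).ne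

lemma permOrbits_ext :
    permOrbits (extPerm τ) =
      insert {Fin.last n} ((permOrbits τ).image (fun O => O.map Fin.castSuccEmb)) := by
  ext S
  constructor
  · intro hS
    obtain ⟨a, -, rfl⟩ := Finset.mem_image.mp hS
    induction a using Fin.lastCases with
    | last => exact Finset.mem_insert.mpr (Or.inl (orbA_last τ))
    | cast x =>
      refine Finset.mem_insert.mpr (Or.inr ?_)
      refine Finset.mem_image.mpr ⟨orb τ x, ?_, (orbA_castSucc τ x).symm⟩
      exact Finset.mem_image.mpr ⟨x, Finset.mem_univ x, rfl⟩
  · intro hS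
    rcases Finset.mem_insert.mp hS with rfl | hS'
    · exact Finset.mem_image.mpr ⟨Fin.last n, Finset.mem_univ _, orbA_last τ⟩
    · obtain ⟨O, hO, rfl⟩ := Finset.mem_image.mp hS'
      obtain ⟨x, -, rfl⟩ := Finset.mem_image.mp hO
      exact Finset.mem_image.mpr ⟨x.castSucc, Finset.mem_univ _, orbA_castSucc τ x⟩

lemma cardA :
    (permOrbits (extPerm τ)).card = (permOrbits τ).card + 1 := by
  rw [permOrbits_ext, Finset.card_insert_of_notMem (last_notMem_image τ),
    Finset.card_image_of_injective _ (fun O O' h => Finset.map_injective _ h)]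

end CaseA

section CaseB

variable (τ : Equiv.Perm (Fin n)) (j : Fin n)

lemma insB_castSucc (x : Fin n) :
    ins j.castSucc τ x.castSucc = if τ x = j then Fin.last n else (τ x).castSucc := by
  simp only [ins, Equiv.Perm.mul_apply, extPerm_castSucc, Equiv.swap_apply_def]
  by_cases h : τ x = j
  · simp [h, (Fin.castSucc_lt_last _).ne]
  · simp [(Fin.castSucc_lt_last (τ x)).ne, Fin.castSucc_inj, h]

lemma insB_last : ins j.castSucc τ (Fin.last n) = j.castSucc := ins_last _ _

lemma stepB (x : Fin n) :
    (ins j.castSucc τ).SameCycle x.castSucc (τ x).castSucc := by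
  set σ := ins j.castSucc τ with hσ
  by_cases h : τ x = j
  · have h1 : σ x.castSucc = Fin.last n := by rw [insB_castSucc, if_pos h]
    have h2 : σ (Fin.last n) = (τ x).castSucc := by rw [insB_last, h]
    have s1 : σ.SameCycle x.castSucc (σ x.castSucc) :=
      (Equiv.Perm.sameCycle_apply_right).mpr (Equiv.Perm.SameCycle.refl _ _)
    have s2 : σ.SameCycle x.castSucc (σ (σ x.castSucc)) :=
      (Equiv.Perm.sameCycle_apply_right).mpr s1
    rwa [h1, h2] at s2
  · have h1 : σ x.castSucc = (τ x).castSucc := by rw [insB_castSucc, if_neg h]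
    have s1 : σ.SameCycle x.castSucc (σ x.castSucc) :=
      (Equiv.Perm.sameCycle_apply_right).mpr (Equiv.Perm.SameCycle.refl _ _)
    rwa [h1] at s1

lemma stepB' (a : Fin (n + 1)) :
    τ.SameCycle (Fin.lastCases j (fun z => z) a)
      (Fin.lastCases j (fun z => z) (ins j.castSucc τ a)) := by
  induction a using Fin.lastCases with
  | last =>
    rw [insB_last]
    simpa using Equiv.Perm.SameCycle.refl τ j
  | cast x =>
    rw [insB_castSucc]
    by_cases h : τ x = j
    · rw [if_pos h]
      simpa [← h] using (Equiv.Perm.sameCycle_apply_right).mpr (Equiv.Perm.SameCycle.refl τ x)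
    · rw [if_neg h]
      simpa using (Equiv.Perm.sameCycle_apply_right).mpr (Equiv.Perm.SameCycle.refl τ x)

lemma sameCycle_insB_iff {x y : Fin n} :
    (ins j.castSucc τ).SameCycle x.castSucc y.castSucc ↔ τ.SameCycle x y := by
  constructor
  · intro h
    have := sameCycle_map (σ := τ) (τ := ins j.castSucc τ)
      (Fin.lastCases j (fun z => z)) (stepB' τ j) h
    simpa using this
  · exact fun h => sameCycle_map Fin.castSucc (stepB τ j) h

lemma sameCycle_insB_last {x : Fin n} :
    (ins j.castSucc τ).SameCycle x.castSucc (Fin.last n) ↔ τ.SameCycle x j := by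
  constructor
  · intro h
    have := sameCycle_map (σ := τ) (τ := ins j.castSucc τ)
      (Fin.lastCases j (fun z => z)) (stepB' τ j) (x := x.castSucc) (y := Fin.last n) h
    simpa using this
  · intro h
    have h1 : (ins j.castSucc τ).SameCycle x.castSucc j.castSucc :=
      (sameCycle_insB_iff τ j).mpr h
    have h2 : (ins j.castSucc τ).SameCycle (Fin.last n) j.castSucc := by
      have := (Equiv.Perm.sameCycle_apply_right
        (f := ins j.castSucc τ) (x := Fin.last n) (y := Fin.last n)).mpr
        (Equiv.Perm.SameCycle.refl _ _)
      rwa [insB_last] at this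
    exact h1.trans h2.symm


/-- The orbit-level insertion map. -/
def hIns (j : Fin n) (O : Finset (Fin n)) : Finset (Fin (n + 1)) :=
  if j ∈ O then insert (Fin.last n) (O.map Fin.castSuccEmb) else O.map Fin.castSuccEmb

lemma last_notMem_map (O : Finset (Fin n)) : Fin.last n ∉ O.map Fin.castSuccEmb := by
  intro h
  obtain ⟨b, -, hb⟩ := Finset.mem_map.mp h
  exact absurd hb (Fin.castSucc_lt_last _).ne

lemma hIns_injective : Function.Injective (hIns j) := by
  intro O O' h
  unfold hIns at h
  by_cases h1 : j ∈ O <;> by_cases h2 : j ∈ O' <;> simp only [h1, h2, if_pos, if_neg,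
    if_true, if_false] at h
  · have := congrArg (fun s => Finset.erase s (Fin.last n)) h
    simp only [Finset.erase_insert (last_notMem_map O), Finset.erase_insert (last_notMem_map O')]
      at this
    exact Finset.map_injective _ this
  · exact absurd (h ▸ Finset.mem_insert_self _ _) (last_notMem_map O')
  · exact absurd (h.symm ▸ Finset.mem_insert_self _ _) (last_notMem_map O)
  · exact Finset.map_injective _ h

lemma orbB_castSucc (x : Fin n) :
    orb (ins j.castSucc τ) x.castSucc = hIns j (orb τ x) := by
  unfold hIns
  by_cases hc : j ∈ orb τ x
  · rw [if_pos hc]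
    have hcx : τ.SameCycle x j := mem_orb.mp hc
    ext a
    induction a using Fin.lastCases with
    | last =>
      simp only [mem_orb, Finset.mem_insert]
      exact iff_of_true ((sameCycle_insB_last τ j).mpr hcx) (by simp)
    | cast z =>
      simp only [mem_orb, Finset.mem_insert, Finset.mem_map, sameCycle_insB_iff]
      constructor
      · intro h; exact Or.inr ⟨z, h, rfl⟩
      · rintro (hz | ⟨b, hb, hbz⟩)
        · exact absurd hz (Fin.castSucc_lt_last _).ne
        · have hb' : b = z := Fin.castSucc_injective _ hbz
          subst hb'; exact hb
  · rw [if_neg hc]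
    have hcx : ¬ τ.SameCycle x j := fun h => hc (mem_orb.mpr h)
    ext a
    induction a using Fin.lastCases with
    | last =>
      simp only [mem_orb]
      refine iff_of_false (fun h => hcx ((sameCycle_insB_last τ j).mp h)) (last_notMem_map _)
    | cast z =>
      simp only [mem_orb, Finset.mem_map, sameCycle_insB_iff]
      constructor
      · intro h; exact ⟨z, h, rfl⟩
      · rintro ⟨b, hb, hbz⟩
        have hb' : b = z := Fin.castSucc_injective _ hbz
        subst hb'; exact hb

lemma orbB_last :
    orb (ins j.castSucc τ) (Fin.last n) = hIns j (orb τ j) := by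
  have hj : j ∈ orb τ j := mem_orb.mpr (Equiv.Perm.SameCycle.refl _ _)
  unfold hIns
  rw [if_pos hj]
  ext a
  induction a using Fin.lastCases with
  | last =>
    simp only [mem_orb, Finset.mem_insert]
    exact iff_of_true (Equiv.Perm.SameCycle.refl _ _) (by simp)
  | cast z =>
    simp only [mem_orb, Finset.mem_insert, Finset.mem_map]
    constructor
    · intro h
      have : (ins j.castSucc τ).SameCycle z.castSucc (Fin.last n) := h.symm
      exact Or.inr ⟨z, ((sameCycle_insB_last τ j).mp this).symm, rfl⟩
    · rintro (hz | ⟨b, hb, hbz⟩)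
      · exact absurd hz (Fin.castSucc_lt_last _).ne
      · have hb' : b = z := Fin.castSucc_injective _ hbz
        subst hb'
        exact ((sameCycle_insB_last τ j).mpr hb.symm).symm

lemma permOrbits_ins :
    permOrbits (ins j.castSucc τ) = (permOrbits τ).image (hIns j) := by
  ext S
  constructor
  · intro hS
    obtain ⟨a, -, rfl⟩ := Finset.mem_image.mp hS
    induction a using Fin.lastCases with
    | last =>
      refine Finset.mem_image.mpr ⟨orb τ j, ?_, (orbB_last τ j).symm⟩
      exact Finset.mem_image.mpr ⟨j, Finset.mem_univ j, rfl⟩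
    | cast x =>
      refine Finset.mem_image.mpr ⟨orb τ x, ?_, (orbB_castSucc τ j x).symm⟩
      exact Finset.mem_image.mpr ⟨x, Finset.mem_univ x, rfl⟩
  · intro hS
    obtain ⟨O, hO, rfl⟩ := Finset.mem_image.mp hS
    obtain ⟨x, -, rfl⟩ := Finset.mem_image.mp hO
    exact Finset.mem_image.mpr ⟨x.castSucc, Finset.mem_univ _, orbB_castSucc τ j x⟩

lemma cardB :
    (permOrbits (ins j.castSucc τ)).card = (permOrbits τ).card := by
  rw [permOrbits_ins, Finset.card_image_of_injective _ (hIns_injective (j := j))]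

end CaseB

section PermE

variable {Ω : Type*} [MeasurableSpace Ω] (μ : Measure Ω)
  (g : Fin n → Ω → ℝ) (f : Ω → ℝ) (τ : Equiv.Perm (Fin n)) (j : Fin n)

lemma prod_map_castSucc (O : Finset (Fin n)) (ω : Ω) :
    (∏ i ∈ O.map Fin.castSuccEmb, (Fin.snoc g f : Fin (n + 1) → Ω → ℝ) i ω) = ∏ x ∈ O, g x ω := by
  rw [Finset.prod_map]
  exact Finset.prod_congr rfl fun x _ => by
    show (Fin.snoc g f : Fin (n + 1) → Ω → ℝ) x.castSucc ω = g x ω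
    rw [Fin.snoc_castSucc]

lemma permE_ext :
    permE μ (Fin.snoc g f) (extPerm τ) = permE μ g τ * ∫ ω, f ω ∂μ := by
  rw [permE, permOrbits_ext, Finset.prod_insert (last_notMem_image τ),
    Finset.prod_image (fun O _ O' _ h => Finset.map_injective _ h)]
  rw [mul_comm, permE]
  congr 1
  · exact Finset.prod_congr rfl fun O _ => by
      congr 1
      funext ω
      exact prod_map_castSucc g f O ω
  · congr 1
    funext ω
    simp [Fin.snoc_last]

lemma permE_ins :
    permE μ (Fin.snoc g f) (ins j.castSucc τ)
      = permE μ (Function.update g j fun ω => g j ω * f ω) τ := by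
  rw [permE, permOrbits_ins, Finset.prod_image (fun O _ O' _ h => hIns_injective j h), permE]
  refine Finset.prod_congr rfl fun O _ => ?_
  congr 1
  funext ω
  unfold hIns
  by_cases hj : j ∈ O
  · rw [if_pos hj, Finset.prod_insert (last_notMem_map O), Fin.snoc_last,
      prod_map_castSucc g f O ω]
    rw [← Finset.mul_prod_erase O (fun x => g x ω) hj,
      ← Finset.mul_prod_erase O (fun x => Function.update g j (fun ω => g j ω * f ω) x ω) hj]
    have herase : (∏ x ∈ O.erase j, Function.update g j (fun ω => g j ω * f ω) x ω)
        = ∏ x ∈ O.erase j, g x ω := by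
      refine Finset.prod_congr rfl fun x hx => ?_
      rw [Function.update_of_ne (Finset.ne_of_mem_erase hx)]
    rw [herase, Function.update_self]
    ring
  · rw [if_neg hj, prod_map_castSucc g f O ω]
    refine Finset.prod_congr rfl fun x hx => ?_
    rw [Function.update_of_ne (fun h => hj (by rwa [h] at hx))]

end PermE

end Stmt7Aux

open Stmt7Aux in
/-- For bounded measurable functions `f¹,…,fⁿ⁻¹,f` on a probability space
(`n ≥ 2`; here there are `n + 1 ≥ 2` functions, `g = (f¹,…,fⁿ⁻¹)` and `f`):
`E_n(f¹,…,fⁿ⁻¹,f) = ∑_{i=1}^{n−1} E_{n−1}(f¹,…,fⁱf,…,fⁿ⁻¹) − E_{n−1}(f¹,…,fⁿ⁻¹)·E(f)`,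
where in the `i`-th summand the `i`-th argument is replaced by the pointwise product `fⁱf`. -/
theorem stmt_7 {Ω : Type*} [MeasurableSpace Ω] (μ : Measure Ω) [IsProbabilityMeasure μ]
    (n : ℕ) (hn : 1 ≤ n) (g : Fin n → Ω → ℝ) (f : Ω → ℝ)
    (hgmeas : ∀ i, Measurable (g i)) (hfmeas : Measurable f)
    (hgbdd : ∀ i, ∃ C, ∀ ω, |g i ω| ≤ C) (hfbdd : ∃ C, ∀ ω, |f ω| ≤ C) :
    En μ (Fin.snoc g f)
      = (∑ i : Fin n, En μ (Function.update g i fun ω => g i ω * f ω))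
        - En μ g * ∫ ω, f ω ∂μ := by
  classical
  have hcardpos : ∀ τ : Equiv.Perm (Fin n), 1 ≤ (permOrbits τ).card := by
    intro τ
    refine Finset.card_pos.mpr ⟨_, Finset.mem_image.mpr ⟨⟨0, hn⟩, Finset.mem_univ _, rfl⟩⟩
  rw [En]
  rw [← Fintype.sum_bijective (fun pt : Fin (n + 1) × Equiv.Perm (Fin n) => ins pt.1 pt.2)
    ins_bijective
    (fun pt => (-1 : ℝ) ^ ((permOrbits (ins pt.1 pt.2)).card - 1)
      * permE μ (Fin.snoc g f) (ins pt.1 pt.2))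
    (fun σ => (-1 : ℝ) ^ ((permOrbits σ).card - 1) * permE μ (Fin.snoc g f) σ)
    (fun _ => rfl)]
  rw [Fintype.sum_prod_type, Fin.sum_univ_castSucc]
  have hlast : (∑ τ : Equiv.Perm (Fin n),
      (-1 : ℝ) ^ ((permOrbits (ins (Fin.last n) τ)).card - 1)
        * permE μ (Fin.snoc g f) (ins (Fin.last n) τ))
      = -(En μ g * ∫ ω, f ω ∂μ) := by
    have hterm : ∀ τ : Equiv.Perm (Fin n),
        (-1 : ℝ) ^ ((permOrbits (ins (Fin.last n) τ)).card - 1)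
          * permE μ (Fin.snoc g f) (ins (Fin.last n) τ)
        = -((-1 : ℝ) ^ ((permOrbits τ).card - 1) * permE μ g τ * ∫ ω, f ω ∂μ) := by
      intro τ
      rw [ins_last_eq, cardA, permE_ext]
      have h1 : (permOrbits τ).card + 1 - 1 = ((permOrbits τ).card - 1) + 1 := by
        have := hcardpos τ; omega
      rw [h1, pow_succ]
      ring
    calc (∑ τ : Equiv.Perm (Fin n),
        (-1 : ℝ) ^ ((permOrbits (ins (Fin.last n) τ)).card - 1)
          * permE μ (Fin.snoc g f) (ins (Fin.last n) τ))
        = ∑ τ : Equiv.Perm (Fin n),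
            -((-1 : ℝ) ^ ((permOrbits τ).card - 1) * permE μ g τ * ∫ ω, f ω ∂μ) :=
          Finset.sum_congr rfl fun τ _ => hterm τ
      _ = -∑ τ : Equiv.Perm (Fin n),
            (-1 : ℝ) ^ ((permOrbits τ).card - 1) * permE μ g τ * ∫ ω, f ω ∂μ :=
          Finset.sum_neg_distrib _
      _ = -(En μ g * ∫ ω, f ω ∂μ) := by rw [En, Finset.sum_mul]
  have hcs : ∀ j : Fin n, (∑ τ : Equiv.Perm (Fin n),
      (-1 : ℝ) ^ ((permOrbits (ins (Fin.castSucc j) τ)).card - 1)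
        * permE μ (Fin.snoc g f) (ins (Fin.castSucc j) τ))
      = En μ (Function.update g j fun ω => g j ω * f ω) := by
    intro j
    rw [En]
    refine Finset.sum_congr rfl fun τ _ => ?_
    rw [cardB, permE_ins]
  rw [hlast]
  rw [Finset.sum_congr rfl fun j _ => hcs j]
  ring
end

section
/- Fix m ≥ 1 and integers 0 ≤ c_1 ≤ c_2 ≤ ⋯ ≤ c_n ≤ m, and let a^i ∈ A(m) be the constant sequence with all entries equal to c_i. Then E_n(a^1, …, a^n) = (c_1/m)(1 − c_2/m)(2 − c_3/m) ⋯ (n−1 − c_n/m). -/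
open Equiv Finset

set_option linter.unusedSectionVars false

/-- The pointwise-min product `∏_{i ∈ O} aⁱ` of a family of sequences over a finset `O`.
(The fold starts at `m`; since all entries of sequences in `A(m)` are `≤ m` and orbits are
nonempty, this is the entrywise minimum over `O`.) -/
def seqProd {m : ℕ} {ι : Type*} (a : ι → Fin m → ℤ) (O : Finset ι) : Fin m → ℤ :=
  fun j => O.fold min (m : ℤ) fun i => a i j

/-- Sahi's functional `E_n(a¹,…,aⁿ) = ∑_{σ ∈ S_n} (−1)^{C_σ−1} ∏_{O orbit of σ} E(∏_{i∈O} aⁱ)`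
for sequences, with pointwise-min products. -/
noncomputable def EnSeq {m : ℕ} {ι : Type*} [Fintype ι] [DecidableEq ι]
    (a : ι → Fin m → ℤ) : ℝ :=
  ∑ σ : Equiv.Perm ι, (-1 : ℝ) ^ ((permOrbits σ).card - 1) *
    ∏ O ∈ permOrbits σ, Eseq (seqProd a O)


namespace Stmt12

variable {ι : Type*} [Fintype ι] [DecidableEq ι]

def orbit (σ : Equiv.Perm ι) (x : ι) : Finset ι :=
  Finset.univ.filter fun y => σ.SameCycle x y

lemma mem_orbit {σ : Equiv.Perm ι} {x y : ι} : y ∈ orbit σ x ↔ σ.SameCycle x y := by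
  simp [orbit]

lemma self_mem_orbit (σ : Equiv.Perm ι) (x : ι) : x ∈ orbit σ x :=
  mem_orbit.2 (Equiv.Perm.SameCycle.refl σ x)

lemma orbit_nonempty (σ : Equiv.Perm ι) (x : ι) : (orbit σ x).Nonempty :=
  ⟨x, self_mem_orbit σ x⟩

lemma permOrbits_eq (σ : Equiv.Perm ι) : permOrbits σ = Finset.univ.image (orbit σ) := rfl

lemma orbit_mem_permOrbits (σ : Equiv.Perm ι) (x : ι) : orbit σ x ∈ permOrbits σ := by
  rw [permOrbits_eq]; exact Finset.mem_image_of_mem _ (Finset.mem_univ x)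

lemma nonempty_of_mem_permOrbits {σ : Equiv.Perm ι} {O : Finset ι} (h : O ∈ permOrbits σ) :
    O.Nonempty := by
  rw [permOrbits_eq, Finset.mem_image] at h
  obtain ⟨x, -, rfl⟩ := h
  exact orbit_nonempty σ x

lemma orbit_eq_of_sameCycle {σ : Equiv.Perm ι} {x y : ι} (h : σ.SameCycle x y) :
    orbit σ x = orbit σ y := by
  ext z
  simp only [mem_orbit]
  exact ⟨fun hz => h.symm.trans hz, fun hz => h.trans hz⟩

lemma permOrbits_nonempty [Nonempty ι] (σ : Equiv.Perm ι) : (permOrbits σ).Nonempty :=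
  ⟨orbit σ (Classical.arbitrary ι), orbit_mem_permOrbits σ _⟩


section Dec
variable {n : ℕ} (τ : Equiv.Perm (Fin n)) (q : Fin n)

lemma sameCycle_of_pow {ι : Type*} {σ : Equiv.Perm ι} {x y : ι} (k : ℕ) (h : (σ^k) x = y) :
    σ.SameCycle x y := ⟨k, by simpa using h⟩

lemma d0_apply_succ (i : Fin n) :
    Equiv.Perm.decomposeFin.symm (0, τ) i.succ = (τ i).succ := by
  rw [Equiv.Perm.decomposeFin_symm_apply_succ]; simp

lemma d0_pow_zero (k : ℕ) : ((Equiv.Perm.decomposeFin.symm (0, τ))^k) 0 = 0 := by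
  induction k with
  | zero => rfl
  | succ k ih => rw [pow_succ, Equiv.Perm.mul_apply, Equiv.Perm.decomposeFin_symm_apply_zero, ih]

lemma d0_pow_succ (k : ℕ) (i : Fin n) :
    ((Equiv.Perm.decomposeFin.symm (0, τ))^k) i.succ = ((τ^k) i).succ := by
  induction k generalizing i with
  | zero => rfl
  | succ k ih => rw [pow_succ, pow_succ, Equiv.Perm.mul_apply, Equiv.Perm.mul_apply,
      d0_apply_succ, ih]

lemma d0_sameCycle_succ {i j : Fin n} :
    (Equiv.Perm.decomposeFin.symm (0, τ)).SameCycle i.succ j.succ ↔ τ.SameCycle i j := by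
  constructor
  · intro h
    obtain ⟨k, -, hk⟩ := h.exists_pow_eq'
    rw [d0_pow_succ] at hk
    exact sameCycle_of_pow k (Fin.succ_injective _ hk)
  · intro h
    obtain ⟨k, -, hk⟩ := h.exists_pow_eq'
    exact sameCycle_of_pow k (by rw [d0_pow_succ, hk])

lemma d0_not_sameCycle (j : Fin n) :
    ¬ (Equiv.Perm.decomposeFin.symm (0, τ)).SameCycle 0 j.succ := by
  intro h
  obtain ⟨k, -, hk⟩ := h.exists_pow_eq'
  rw [d0_pow_zero] at hk
  exact (Fin.succ_ne_zero j) hk.symm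

-- case p = q.succ
variable (q : Fin n)

lemma ds_apply_zero : Equiv.Perm.decomposeFin.symm (q.succ, τ) 0 = q.succ :=
  Equiv.Perm.decomposeFin_symm_apply_zero _ _

lemma ds_apply_succ (i : Fin n) :
    Equiv.Perm.decomposeFin.symm (q.succ, τ) i.succ
      = if τ i = q then 0 else (τ i).succ := by
  rw [Equiv.Perm.decomposeFin_symm_apply_succ]
  rcases eq_or_ne (τ i) q with h | h
  · simp [h, Equiv.swap_apply_right]
  · rw [Equiv.swap_apply_of_ne_of_ne (Fin.succ_ne_zero _) (by simpa using h), if_neg h]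

lemma ds_step (i : Fin n) :
    (Equiv.Perm.decomposeFin.symm (q.succ, τ)).SameCycle i.succ (τ i).succ := by
  rcases eq_or_ne (τ i) q with h | h
  · refine sameCycle_of_pow 2 ?_
    have h1 : Equiv.Perm.decomposeFin.symm (q.succ, τ) i.succ = 0 := by
      rw [ds_apply_succ, if_pos h]
    calc ((Equiv.Perm.decomposeFin.symm (q.succ, τ))^2) i.succ
        = Equiv.Perm.decomposeFin.symm (q.succ, τ)
            (Equiv.Perm.decomposeFin.symm (q.succ, τ) i.succ) := by
          rw [pow_succ, pow_one, Equiv.Perm.mul_apply]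
      _ = (τ i).succ := by rw [h1, ds_apply_zero, h]
  · exact sameCycle_of_pow 1 (by rw [pow_one, ds_apply_succ, if_neg h])

lemma ds_fwd_aux (k : ℕ) (i : Fin n) :
    (Equiv.Perm.decomposeFin.symm (q.succ, τ)).SameCycle i.succ ((τ^k) i).succ := by
  induction k generalizing i with
  | zero => exact Equiv.Perm.SameCycle.refl _ _
  | succ k ih =>
    have : ((τ^(k+1)) i) = (τ^k) (τ i) := by rw [pow_succ, Equiv.Perm.mul_apply]
    rw [this]
    exact (ds_step τ q i).trans (ih (τ i))

lemma ds_fwd {i j : Fin n} (h : τ.SameCycle i j) :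
    (Equiv.Perm.decomposeFin.symm (q.succ, τ)).SameCycle i.succ j.succ := by
  obtain ⟨k, -, hk⟩ := h.exists_pow_eq'
  exact hk ▸ ds_fwd_aux τ q k i

lemma ds_bwd : ∀ (k : ℕ) (i j : Fin n),
    ((Equiv.Perm.decomposeFin.symm (q.succ, τ))^k) i.succ = j.succ → τ.SameCycle i j := by
  intro k
  induction k using Nat.strong_induction_on with
  | _ k IH =>
    intro i j h
    match k with
    | 0 =>
      simp only [pow_zero, Equiv.Perm.coe_one, id_eq] at h
      exact (Fin.succ_injective _ h) ▸ Equiv.Perm.SameCycle.refl _ _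
    | Nat.succ k =>
      rw [pow_succ, Equiv.Perm.mul_apply] at h
      rcases eq_or_ne (τ i) q with hq | hq
      · rw [ds_apply_succ, if_pos hq] at h
        match k with
        | 0 =>
          simp only [pow_zero, Equiv.Perm.coe_one, id_eq] at h
          exact absurd h.symm (Fin.succ_ne_zero j)
        | Nat.succ k' =>
          rw [pow_succ, Equiv.Perm.mul_apply, ds_apply_zero] at h
          have h2 : τ.SameCycle q j := IH k' (by omega) q j h
          exact (sameCycle_of_pow 1 (by rw [pow_one, hq])).trans h2
      · rw [ds_apply_succ, if_neg hq] at h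
        exact (sameCycle_of_pow 1 (by rw [pow_one])).trans (IH k (by omega) (τ i) j h)

lemma ds_sameCycle_succ {i j : Fin n} :
    (Equiv.Perm.decomposeFin.symm (q.succ, τ)).SameCycle i.succ j.succ ↔ τ.SameCycle i j := by
  constructor
  · intro h
    obtain ⟨k, -, hk⟩ := h.exists_pow_eq'
    exact ds_bwd τ q k i j hk
  · exact ds_fwd τ q

lemma ds_sameCycle_zero {j : Fin n} :
    (Equiv.Perm.decomposeFin.symm (q.succ, τ)).SameCycle 0 j.succ ↔ τ.SameCycle q j := by
  have h0 : (Equiv.Perm.decomposeFin.symm (q.succ, τ)).SameCycle 0 q.succ :=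
    sameCycle_of_pow 1 (by rw [pow_one, ds_apply_zero])
  constructor
  · intro h
    obtain ⟨k, -, hk⟩ := h.exists_pow_eq'
    match k with
    | 0 =>
      simp only [pow_zero, Equiv.Perm.coe_one, id_eq] at hk
      exact absurd hk (Fin.succ_ne_zero j).symm
    | Nat.succ k =>
      rw [pow_succ, Equiv.Perm.mul_apply, ds_apply_zero] at hk
      exact ds_bwd τ q k q j hk
  · intro h
    exact h0.trans (ds_fwd τ q h)


/-- splice map -/
def gmap (q : Fin n) (O : Finset (Fin n)) : Finset (Fin (n+1)) :=
  if q ∈ O then insert 0 (O.map (Fin.succEmb n)) else O.map (Fin.succEmb n)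

lemma d0_orbit_zero : orbit (Equiv.Perm.decomposeFin.symm (0, τ)) 0 = {0} := by
  ext y
  cases y using Fin.cases with
  | zero => simp [mem_orbit, Equiv.Perm.SameCycle.refl]
  | succ j => simp [mem_orbit, d0_not_sameCycle τ j, Fin.succ_ne_zero]

lemma succ_mem_map_iff (s : Finset (Fin n)) (j : Fin n) :
    j.succ ∈ s.map (Fin.succEmb n) ↔ j ∈ s := by
  simp only [Finset.mem_map, Fin.coe_succEmb]
  constructor
  · rintro ⟨x, hx, hxe⟩
    obtain rfl := Fin.succ_injective _ hxe
    exact hx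
  · intro h; exact ⟨j, h, rfl⟩

lemma zero_not_mem_map (s : Finset (Fin n)) :
    (0 : Fin (n+1)) ∉ s.map (Fin.succEmb n) := by
  simp only [Finset.mem_map, Fin.coe_succEmb]
  rintro ⟨x, -, hx⟩; exact absurd hx (Fin.succ_ne_zero x)

lemma d0_orbit_succ (i : Fin n) :
    orbit (Equiv.Perm.decomposeFin.symm (0, τ)) i.succ = (orbit τ i).map (Fin.succEmb n) := by
  ext y
  cases y using Fin.cases with
  | zero =>
    simp only [mem_orbit]
    constructor
    · intro h; exact (d0_not_sameCycle τ i h.symm).elim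
    · intro h; exact (zero_not_mem_map _ h).elim
  | succ j =>
    rw [succ_mem_map_iff, mem_orbit, mem_orbit, d0_sameCycle_succ]

lemma ds_orbit_succ (i : Fin n) :
    orbit (Equiv.Perm.decomposeFin.symm (q.succ, τ)) i.succ = gmap q (orbit τ i) := by
  ext y
  by_cases hq : τ.SameCycle i q
  · rw [gmap, if_pos (mem_orbit.2 hq)]
    cases y using Fin.cases with
    | zero =>
      rw [mem_orbit]
      constructor
      · intro _; exact Finset.mem_insert_self _ _
      · intro _; exact ((ds_sameCycle_zero τ q).2 hq.symm).symm
    | succ j =>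
      rw [mem_orbit, Finset.mem_insert, succ_mem_map_iff, mem_orbit, ds_sameCycle_succ]
      simp [Fin.succ_ne_zero]
  · rw [gmap, if_neg (fun hm => hq (mem_orbit.1 hm))]
    cases y using Fin.cases with
    | zero =>
      rw [mem_orbit]
      constructor
      · intro h; exact (hq ((ds_sameCycle_zero τ q).1 h.symm).symm).elim
      · intro h; exact (zero_not_mem_map _ h).elim
    | succ j =>
      rw [mem_orbit, succ_mem_map_iff, mem_orbit, ds_sameCycle_succ]

lemma ds_orbit_zero :
    orbit (Equiv.Perm.decomposeFin.symm (q.succ, τ)) 0 = gmap q (orbit τ q) := by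
  have h : (Equiv.Perm.decomposeFin.symm (q.succ, τ)).SameCycle 0 q.succ :=
    (ds_sameCycle_zero τ q).2 (Equiv.Perm.SameCycle.refl _ _)
  rw [← ds_orbit_succ τ q q]
  ext z; simp only [mem_orbit]
  exact ⟨fun hz => h.symm.trans hz, fun hz => h.trans hz⟩


end Dec

section Orbits
variable {n : ℕ} (τ : Equiv.Perm (Fin n)) (q : Fin n)

lemma image_univ_succ {α : Type*} [DecidableEq α] (f : Fin (n+1) → α) :
    (univ : Finset (Fin (n+1))).image f
      = insert (f 0) ((univ : Finset (Fin n)).image (fun i => f i.succ)) := by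
  rw [Fin.univ_succ, Finset.cons_eq_insert, Finset.image_insert, Finset.map_eq_image,
    Finset.image_image]
  rfl

lemma permOrbits_d0 :
    permOrbits (Equiv.Perm.decomposeFin.symm (0, τ))
      = insert {0} ((permOrbits τ).image (fun O => O.map (Fin.succEmb n))) := by
  rw [permOrbits_eq, image_univ_succ, d0_orbit_zero, permOrbits_eq, Finset.image_image]
  congr 1
  exact Finset.image_congr fun i _ => d0_orbit_succ τ i

lemma permOrbits_ds :
    permOrbits (Equiv.Perm.decomposeFin.symm (q.succ, τ))
      = (permOrbits τ).image (gmap q) := by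
  rw [permOrbits_eq, image_univ_succ, ds_orbit_zero, permOrbits_eq, Finset.image_image]
  rw [Finset.image_congr (g := fun i => gmap q (orbit τ i)) fun i _ => ds_orbit_succ τ q i]
  exact Finset.insert_eq_self.2 (Finset.mem_image_of_mem _ (Finset.mem_univ q))

lemma zero_singleton_not_mem :
    ({0} : Finset (Fin (n+1))) ∉ (permOrbits τ).image (fun O => O.map (Fin.succEmb n)) := by
  simp only [Finset.mem_image]
  rintro ⟨O, -, hOe⟩
  exact zero_not_mem_map O (hOe ▸ Finset.mem_singleton_self 0)

lemma card_d0 :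
    (permOrbits (Equiv.Perm.decomposeFin.symm (0, τ))).card = (permOrbits τ).card + 1 := by
  rw [permOrbits_d0, Finset.card_insert_of_notMem (zero_singleton_not_mem τ),
    Finset.card_image_of_injective _ (Finset.map_injective _)]

lemma erase_gmap (O : Finset (Fin n)) : (gmap q O).erase 0 = O.map (Fin.succEmb n) := by
  rw [gmap]; split_ifs with h
  · rw [Finset.erase_insert (zero_not_mem_map O)]
  · exact Finset.erase_eq_of_notMem (zero_not_mem_map O)

lemma gmap_injective : Function.Injective (gmap q) := fun O₁ O₂ h =>
  Finset.map_injective _ (by rw [← erase_gmap q O₁, ← erase_gmap q O₂, h])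

lemma card_ds :
    (permOrbits (Equiv.Perm.decomposeFin.symm (q.succ, τ))).card = (permOrbits τ).card := by
  rw [permOrbits_ds, Finset.card_image_of_injective _ (gmap_injective q)]

lemma sup_map_succ (O : Finset (Fin n)) (h : O.Nonempty) :
    (O.map (Fin.succEmb n)).sup Fin.val = O.sup Fin.val + 1 := by
  rw [Finset.sup_map]
  obtain ⟨a, ha, hae⟩ := Finset.exists_mem_eq_sup O h Fin.val
  refine le_antisymm (Finset.sup_le fun x hx => ?_) ?_
  · have := Finset.le_sup (f := Fin.val) hx
    simpa using Nat.succ_le_succ this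
  · rw [hae]
    have := Finset.le_sup (f := (Fin.val ∘ Fin.succEmb n)) ha
    simpa using this

lemma sup_gmap (O : Finset (Fin n)) (h : O.Nonempty) :
    (gmap q O).sup Fin.val = O.sup Fin.val + 1 := by
  rw [gmap]; split_ifs with hq
  · rw [Finset.sup_insert, sup_map_succ O h]
    simp
  · exact sup_map_succ O h

lemma prod_d0 (z : ℕ → ℝ) :
    ∏ O ∈ permOrbits (Equiv.Perm.decomposeFin.symm (0, τ)), z (O.sup Fin.val)
      = z 0 * ∏ O ∈ permOrbits τ, z (O.sup Fin.val + 1) := by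
  rw [permOrbits_d0, Finset.prod_insert (zero_singleton_not_mem τ),
    Finset.prod_image (fun O₁ _ O₂ _ h => Finset.map_injective _ h)]
  refine congrArg₂ (· * ·) (by simp) (Finset.prod_congr rfl fun O hO => ?_)
  rw [sup_map_succ O (nonempty_of_mem_permOrbits hO)]

lemma prod_ds (z : ℕ → ℝ) :
    ∏ O ∈ permOrbits (Equiv.Perm.decomposeFin.symm (q.succ, τ)), z (O.sup Fin.val)
      = ∏ O ∈ permOrbits τ, z (O.sup Fin.val + 1) := by
  rw [permOrbits_ds, Finset.prod_image (fun O₁ _ O₂ _ h => gmap_injective q h)]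
  exact Finset.prod_congr rfl fun O hO => by
    rw [sup_gmap q O (nonempty_of_mem_permOrbits hO)]

end Orbits

noncomputable def F (n : ℕ) (z : ℕ → ℝ) : ℝ :=
  ∑ σ : Equiv.Perm (Fin n), (-1:ℝ)^(permOrbits σ).card * ∏ O ∈ permOrbits σ, z (O.sup Fin.val)

lemma F_zero (z : ℕ → ℝ) : F 0 z = 1 := by
  simp [F, permOrbits]

lemma F_succ (n : ℕ) (z : ℕ → ℝ) :
    F (n+1) z = ((n:ℝ) - z 0) * F n (fun k => z (k+1)) := by
  have h := Equiv.sum_comp (Equiv.Perm.decomposeFin (n := n)).symm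
      (fun σ : Equiv.Perm (Fin (n+1)) =>
        (-1:ℝ)^(permOrbits σ).card * ∏ O ∈ permOrbits σ, z (O.sup Fin.val))
  rw [F, ← h, Fintype.sum_prod_type, Fin.sum_univ_succ]
  have h0 : (∑ τ : Equiv.Perm (Fin n),
      (-1:ℝ)^(permOrbits (Equiv.Perm.decomposeFin.symm ((0 : Fin (n+1)), τ))).card *
        ∏ O ∈ permOrbits (Equiv.Perm.decomposeFin.symm ((0 : Fin (n+1)), τ)), z (O.sup Fin.val))
      = (- z 0) * F n (fun k => z (k+1)) := by
    rw [F, Finset.mul_sum]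
    refine Finset.sum_congr rfl fun τ _ => ?_
    rw [card_d0, prod_d0, pow_succ]
    ring
  have hs : ∀ p : Fin n, (∑ τ : Equiv.Perm (Fin n),
      (-1:ℝ)^(permOrbits (Equiv.Perm.decomposeFin.symm (p.succ, τ))).card *
        ∏ O ∈ permOrbits (Equiv.Perm.decomposeFin.symm (p.succ, τ)), z (O.sup Fin.val))
      = F n (fun k => z (k+1)) := by
    intro p
    rw [F]
    refine Finset.sum_congr rfl fun τ _ => ?_
    rw [card_ds, prod_ds]
  rw [h0, Finset.sum_congr rfl fun p _ => hs p, Finset.sum_const, Finset.card_univ,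
    Fintype.card_fin, nsmul_eq_mul]
  ring

lemma F_eq : ∀ (n : ℕ) (z : ℕ → ℝ),
    F n z = ∏ i ∈ Finset.range n, ((n:ℝ) - 1 - (i:ℝ) - z i)
  | 0, z => by simpa using F_zero z
  | (n+1), z => by
    rw [F_succ, F_eq n, Finset.prod_range_succ', mul_comm]
    congr 1
    · exact Finset.prod_congr rfl fun i _ => by push_cast; ring
    · push_cast; ring

section Conj
variable {ι : Type*} [Fintype ι] [DecidableEq ι]

lemma orbit_conj (g σ : Equiv.Perm ι) (x : ι) :
    orbit (g * σ * g⁻¹) (g x) = (orbit σ x).image g := by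
  ext y
  rw [mem_orbit, Finset.mem_image]
  constructor
  · intro h
    have h2 := Equiv.Perm.sameCycle_conj.1 h
    refine ⟨g⁻¹ y, mem_orbit.2 ?_, by simp⟩
    simpa using h2
  · rintro ⟨w, hw, rfl⟩
    exact Equiv.Perm.sameCycle_conj.2 (by simpa using mem_orbit.1 hw)

lemma permOrbits_conj (g σ : Equiv.Perm ι) :
    permOrbits (g * σ * g⁻¹) = (permOrbits σ).image (Finset.image g) := by
  rw [permOrbits_eq, permOrbits_eq, Finset.image_image]
  conv_lhs => rw [← Finset.image_univ_equiv g, Finset.image_image]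
  exact Finset.image_congr fun x _ => orbit_conj g σ x

lemma permOrbits_conj_card (g σ : Equiv.Perm ι) :
    (permOrbits (g * σ * g⁻¹)).card = (permOrbits σ).card := by
  rw [permOrbits_conj, Finset.card_image_of_injective _ (Finset.image_injective g.injective)]

end Conj

lemma fold_min_eq {ι : Type*} (s : Finset ι) (hs : s.Nonempty) (b : ℤ) (f : ι → ℤ) :
    s.fold min b f = min b (s.inf' hs f) := by
  induction' hs using Finset.Nonempty.cons_induction with a a s ha hs ih
  · simp [min_comm]
  · rw [Finset.fold_cons, ih, Finset.inf'_cons]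
    rw [min_left_comm]

lemma sup_image_rev {n : ℕ} (O : Finset (Fin n)) (hO : O.Nonempty) :
    (O.image Fin.rev).sup Fin.val = (Fin.rev (O.min' hO)).val := by
  refine le_antisymm (Finset.sup_le ?_) (Finset.le_sup (f := Fin.val)
    (Finset.mem_image_of_mem _ (O.min'_mem hO)))
  intro y hy
  obtain ⟨x, hx, rfl⟩ := Finset.mem_image.1 hy
  exact Fin.rev_le_rev.2 (O.min'_le x hx)

def conjEquiv {G : Type*} [Group G] (r : G) : G ≃ G where
  toFun σ := r * σ * r⁻¹
  invFun σ := r⁻¹ * σ * r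
  left_inv σ := by group
  right_inv σ := by group

lemma conjEquiv_apply {G : Type*} [Group G] (r σ : G) : conjEquiv r σ = r * σ * r⁻¹ := rfl

end Stmt12

/-- If `aⁱ ∈ A(m)` is the constant sequence with all entries `cᵢ`, where
`0 ≤ c₁ ≤ ⋯ ≤ cₙ ≤ m`, then `E_n(a¹,…,aⁿ) = (c₁/m)(1 − c₂/m)(2 − c₃/m)⋯(n−1 − cₙ/m)`. -/
theorem stmt_12 (m : ℕ) (hm : 1 ≤ m) (n : ℕ) (hn : 0 < n) (c : Fin n → ℤ)
    (hc0 : ∀ i, 0 ≤ c i) (hcm : ∀ i, c i ≤ (m : ℤ)) (hmono : Monotone c) :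
    EnSeq (fun i => fun _ : Fin m => c i)
      = ((c ⟨0, hn⟩ : ℝ) / m) *
        ∏ i ∈ Finset.univ.erase ⟨0, hn⟩, ((i.val : ℝ) - (c i : ℝ) / m) := by
  classical
  have hm0 : (m:ℝ) ≠ 0 := Nat.cast_ne_zero.2 (by omega)
  set z : ℕ → ℝ := fun k => if h : k < n then ((c (Fin.rev ⟨k, h⟩) : ℤ) : ℝ) / (m:ℝ) else 0
    with hzdef
  set G : ℕ → ℝ := fun j => (j:ℝ) - (if h : j < n then ((c ⟨j, h⟩ : ℤ) : ℝ) else 0) / (m:ℝ)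
    with hGdef
  have perO : ∀ O : Finset (Fin n), O.Nonempty →
      Eseq (seqProd (fun i => fun _ : Fin m => c i) O)
        = z ((O.image Fin.rev).sup Fin.val) := by
    intro O hO
    have hfold : (O.fold min (m:ℤ) fun i => c i) = c (O.min' hO) := by
      rw [Stmt12.fold_min_eq O hO]
      have hinf : O.inf' hO c = c (O.min' hO) :=
        le_antisymm (Finset.inf'_le _ (O.min'_mem hO))
          (Finset.le_inf' _ _ fun i hi => hmono (O.min'_le i hi))
      rw [hinf]
      exact min_eq_right (hcm _)
    have hlt : (Fin.rev (O.min' hO)).val < n := (Fin.rev (O.min' hO)).isLt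
    have hrev : Fin.rev (⟨(Fin.rev (O.min' hO)).val, hlt⟩ : Fin n) = O.min' hO :=
      Fin.rev_rev _
    have hval : ∀ j : Fin m,
        ((seqProd (fun i => fun _ : Fin m => c i) O j : ℤ) : ℝ) = ((c (O.min' hO) : ℤ) : ℝ) := by
      intro j
      have h1 : seqProd (fun i => fun _ : Fin m => c i) O j
          = O.fold min (m:ℤ) fun i => c i := rfl
      rw [h1, hfold]
    rw [Eseq, Finset.sum_congr rfl fun j _ => hval j, Finset.sum_const, Finset.card_univ,
      Fintype.card_fin, nsmul_eq_mul, Stmt12.sup_image_rev O hO, hzdef]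
    beta_reduce
    rw [dif_pos hlt, hrev, sq, mul_div_mul_left _ _ hm0]
  have key : EnSeq (fun i => fun _ : Fin m => c i) = - Stmt12.F n z := by
    have hne : Nonempty (Fin n) := ⟨⟨0, hn⟩⟩
    set r : Equiv.Perm (Fin n) := Fin.revPerm with hr
    have hterm : ∀ σ : Equiv.Perm (Fin n),
        (-1:ℝ)^((permOrbits σ).card - 1) *
          ∏ O ∈ permOrbits σ, Eseq (seqProd (fun i => fun _ : Fin m => c i) O)
        = -((-1:ℝ)^((permOrbits (r * σ * r⁻¹)).card) *
            ∏ O ∈ permOrbits (r * σ * r⁻¹), z (O.sup Fin.val)) := by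
      intro σ
      have hcard : 1 ≤ (permOrbits σ).card :=
        Finset.card_pos.2 (Stmt12.permOrbits_nonempty σ)
      rw [Stmt12.permOrbits_conj_card, Stmt12.permOrbits_conj,
        Finset.prod_image fun O₁ _ O₂ _ h => Finset.image_injective r.injective h]
      have hcoe : ⇑r = Fin.rev := rfl
      simp only [hcoe]
      have hsign : (-1:ℝ)^((permOrbits σ).card - 1) = -(-1:ℝ)^(permOrbits σ).card :=
        calc (-1:ℝ)^((permOrbits σ).card - 1)
            = -((-1:ℝ)^((permOrbits σ).card - 1) * (-1)) := by ring
          _ = -(-1:ℝ)^((permOrbits σ).card - 1 + 1) := by rw [pow_succ]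
          _ = -(-1:ℝ)^(permOrbits σ).card := by rw [Nat.sub_add_cancel hcard]
      rw [Finset.prod_congr rfl fun O hO => perO O (Stmt12.nonempty_of_mem_permOrbits hO),
        hsign]
      ring
    have hsum := Equiv.sum_comp (Stmt12.conjEquiv r)
      (fun σ : Equiv.Perm (Fin n) =>
        (-1:ℝ)^(permOrbits σ).card * ∏ O ∈ permOrbits σ, z (O.sup Fin.val))
    simp only [Stmt12.conjEquiv_apply] at hsum
    calc EnSeq (fun i => fun _ : Fin m => c i)
        = ∑ σ : Equiv.Perm (Fin n),
            -((-1:ℝ)^((permOrbits (r * σ * r⁻¹)).card) *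
              ∏ O ∈ permOrbits (r * σ * r⁻¹), z (O.sup Fin.val)) := by
          rw [EnSeq]
          exact Finset.sum_congr rfl fun σ _ => hterm σ
      _ = -∑ σ : Equiv.Perm (Fin n),
            (-1:ℝ)^((permOrbits (r * σ * r⁻¹)).card) *
              ∏ O ∈ permOrbits (r * σ * r⁻¹), z (O.sup Fin.val) :=
          Finset.sum_neg_distrib _
      _ = - Stmt12.F n z := by rw [Stmt12.F, hsum]
  rw [key, Stmt12.F_eq]
  have hG1 : ∀ i ∈ Finset.range n, ((n:ℝ) - 1 - (i:ℝ) - z i) = G (n-1-i) := by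
    intro i hi
    have hi' : i < n := Finset.mem_range.1 hi
    have h2 : n-1-i < n := by omega
    rw [hGdef, hzdef]
    beta_reduce
    rw [dif_pos hi', dif_pos h2]
    have hrev : Fin.rev (⟨i, hi'⟩ : Fin n) = ⟨n-1-i, h2⟩ := by
      apply Fin.ext
      rw [Fin.val_rev]
      show n - (i+1) = n-1-i
      omega
    have hcast : ((n-1-i : ℕ):ℝ) = (n:ℝ) - 1 - (i:ℝ) := by
      rw [show n-1-i = n-(1+i) by omega, Nat.cast_sub (by omega)]
      push_cast; ring
    rw [hrev, hcast]
  rw [Finset.prod_congr rfl hG1, Finset.prod_range_reflect,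
    ← Fin.prod_univ_eq_prod_range G n]
  have hG2 : ∀ i : Fin n, G i.val = (i.val:ℝ) - ((c i : ℤ):ℝ)/(m:ℝ) := by
    intro i
    rw [hGdef]
    beta_reduce
    rw [dif_pos i.isLt]
  rw [Finset.prod_congr rfl fun i _ => hG2 i,
    ← Finset.mul_prod_erase Finset.univ _ (Finset.mem_univ (⟨0,hn⟩ : Fin n))]
  have h0 : (((⟨0,hn⟩ : Fin n)).val : ℝ) = 0 := by norm_num
  rw [h0]
  ring
end

section
/- Fix m ≥ 1 and 1 ≤ i ≤ m−1. If a ∈ A(m) has a descent at i, but a^1, …, a^{n−1} ∈ A(m) do not (i.e. (a^j)_i = (a^j)_{i+1} for each j), then 2 E_n(a^1, …, a^{n−1}, a) = E_n(a^1, …, a^{n−1}, a⁺) + E_n(a^1, …, a^{n−1}, a⁻), where a⁺ = a^{+,i} and a⁻ = a^{−,i}. -/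
lemma orbitFilter_mem {ι : Type*} [Fintype ι] [DecidableEq ι] (σ : Equiv.Perm ι) (x : ι) :
    (Finset.univ.filter fun y => σ.SameCycle x y) ∈ permOrbits σ :=
  Finset.mem_image_of_mem _ (Finset.mem_univ x)

lemma orbit_eq {ι : Type*} [Fintype ι] [DecidableEq ι] (σ : Equiv.Perm ι) {O : Finset ι}
    (hO : O ∈ permOrbits σ) {x : ι} (hx : x ∈ O) :
    O = Finset.univ.filter fun y => σ.SameCycle x y := by
  obtain ⟨z, -, rfl⟩ := Finset.mem_image.mp hO
  have hzx : σ.SameCycle z x := (Finset.mem_filter.mp hx).2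
  ext y
  simp only [Finset.mem_filter, Finset.mem_univ, true_and]
  exact ⟨fun h => hzx.symm.trans h, fun h => hzx.trans h⟩

lemma snoc_ne_last {n : ℕ} {α : Type*} (g : Fin n → α) (x : α) (l : Fin (n+1))
    (hl : l ≠ Fin.last n) : (Fin.snoc g x : Fin (n+1) → α) l = g (l.castPred hl) := by
  have h : l.1 < n := Fin.val_lt_last hl
  simp [Fin.snoc, h, Fin.castPred, Fin.castLT]

/-- The min of the `g`-part over an orbit (independent of the last sequence). -/
def cFun {m n : ℕ} (g : Fin n → Fin m → ℤ) (O : Finset (Fin (n+1))) : Fin m → ℤ :=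
  fun j => (O.erase (Fin.last n)).fold min (m : ℤ) fun l => (Fin.snoc g (0 : Fin m → ℤ) : Fin (n+1) → Fin m → ℤ) l j

lemma seqProd_snoc {m n : ℕ} (g : Fin n → Fin m → ℤ) (x : Fin m → ℤ)
    (O : Finset (Fin (n+1))) (hO : Fin.last n ∈ O) (j : Fin m) :
    seqProd (Fin.snoc g x) O j = min (x j) (cFun g O j) := by
  unfold seqProd cFun
  conv_lhs => rw [← Finset.insert_erase hO]
  rw [Finset.fold_insert (Finset.notMem_erase _ _), Fin.snoc_last]
  congr 1
  apply Finset.fold_congr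
  intro l hl
  have hln : l ≠ Fin.last n := Finset.ne_of_mem_erase hl
  rw [snoc_ne_last g x l hln, snoc_ne_last g 0 l hln]

lemma seqProd_snoc_notmem {m n : ℕ} (g : Fin n → Fin m → ℤ) (x y : Fin m → ℤ)
    (O : Finset (Fin (n+1))) (hO : Fin.last n ∉ O) :
    seqProd (Fin.snoc g x) O = seqProd (Fin.snoc g y) O := by
  funext j
  apply Finset.fold_congr
  intro l hl
  have hln : l ≠ Fin.last n := fun h => hO (h ▸ hl)
  rw [snoc_ne_last g x l hln, snoc_ne_last g y l hln]

lemma eseq_key {m n : ℕ} (i : ℕ) (hi : i + 1 < m)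
    (g : Fin n → Fin m → ℤ)
    (hgnodes : ∀ l, g l ⟨i, Nat.lt_of_succ_lt hi⟩ = g l ⟨i + 1, hi⟩)
    (a : Fin m → ℤ)
    (O : Finset (Fin (n+1))) (hO : Fin.last n ∈ O) :
    Eseq (seqProd (Fin.snoc g (aPlus a i hi)) O) + Eseq (seqProd (Fin.snoc g (aMinus a i hi)) O)
      = 2 * Eseq (seqProd (Fin.snoc g a) O) := by
  set iF : Fin m := ⟨i, Nat.lt_of_succ_lt hi⟩ with hiF
  set iF1 : Fin m := ⟨i + 1, hi⟩ with hiF1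
  have hne : iF ≠ iF1 := by simp [hiF, hiF1, Fin.ext_iff]
  have hcc : cFun g O iF = cFun g O iF1 := by
    unfold cFun
    apply Finset.fold_congr
    intro l hl
    have hln : l ≠ Fin.last n := Finset.ne_of_mem_erase hl
    rw [snoc_ne_last g 0 l hln]
    exact hgnodes _
  have hpi : aPlus a i hi iF = a iF := Function.update_of_ne hne _ _
  have hpi1 : aPlus a i hi iF1 = a iF := Function.update_self _ _ _
  have hmi : aMinus a i hi iF = a iF1 := Function.update_self _ _ _
  have hmi1 : aMinus a i hi iF1 = a iF1 := Function.update_of_ne hne.symm _ _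
  have hsum : ∑ j : Fin m, (min (aPlus a i hi j) (cFun g O j)
        + min (aMinus a i hi j) (cFun g O j))
      = ∑ j : Fin m, 2 * min (a j) (cFun g O j) := by
    rw [← sub_eq_zero, ← Finset.sum_sub_distrib]
    rw [← Finset.sum_subset (Finset.subset_univ ({iF, iF1} : Finset (Fin m)))]
    · rw [Finset.sum_pair hne, hpi, hpi1, hmi, hmi1, hcc]
      omega
    · intro j _ hj
      simp only [Finset.mem_insert, Finset.mem_singleton, not_or] at hj
      have h1 : aPlus a i hi j = a j := Function.update_of_ne hj.2 _ _
      have h2 : aMinus a i hi j = a j := Function.update_of_ne hj.1 _ _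
      rw [h1, h2]; ring
  have e : ∀ x : Fin m → ℤ, seqProd (Fin.snoc g x) O = fun j => min (x j) (cFun g O j) :=
    fun x => funext (seqProd_snoc g x O hO)
  unfold Eseq
  rw [e, e, e, ← add_div, ← mul_div_assoc]
  congr 1
  rw [← Finset.sum_add_distrib, Finset.mul_sum]
  exact_mod_cast hsum

/-- If `a ∈ A(m)` has a descent at `i` but `a¹,…,aⁿ⁻¹ ∈ A(m)` do not
(here there are `n + 1` sequences in all: `g = (a¹,…,aⁿ⁻¹)` and `a`), then
`2E_n(a¹,…,aⁿ⁻¹,a) = E_n(a¹,…,aⁿ⁻¹,a⁺) + E_n(a¹,…,aⁿ⁻¹,a⁻)`. -/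
theorem stmt_13 (m : ℕ) (hm : 1 ≤ m) (i : ℕ) (hi : i + 1 < m) (n : ℕ)
    (g : Fin n → Fin m → ℤ) (hg : ∀ l, memA m (g l))
    (hgnodes : ∀ l, g l ⟨i, by omega⟩ = g l ⟨i + 1, hi⟩)
    (a : Fin m → ℤ) (ha : memA m a)
    (hdes : a ⟨i + 1, hi⟩ < a ⟨i, by omega⟩) :
    2 * EnSeq (Fin.snoc g a)
      = EnSeq (Fin.snoc g (aPlus a i hi)) + EnSeq (Fin.snoc g (aMinus a i hi)) := by
  unfold EnSeq
  rw [Finset.mul_sum, ← Finset.sum_add_distrib]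
  apply Finset.sum_congr rfl
  intro σ _
  set O₀ : Finset (Fin (n+1)) := Finset.univ.filter (fun y => σ.SameCycle (Fin.last n) y) with hO₀def
  have hO₀mem : O₀ ∈ permOrbits σ := orbitFilter_mem σ _
  have hlast : Fin.last n ∈ O₀ := by
    simp only [hO₀def, Finset.mem_filter, Finset.mem_univ, true_and]
    exact Equiv.Perm.SameCycle.refl σ _
  have hrest : ∀ O ∈ (permOrbits σ).erase O₀, Fin.last n ∉ O := by
    intro O hO hmem
    exact Finset.ne_of_mem_erase hO
      (by rw [orbit_eq σ (Finset.mem_of_mem_erase hO) hmem, hO₀def])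
  rw [← Finset.mul_prod_erase _ _ hO₀mem, ← Finset.mul_prod_erase _ _ hO₀mem,
    ← Finset.mul_prod_erase _ _ hO₀mem]
  have hR : ∀ x : Fin m → ℤ, ∏ O ∈ (permOrbits σ).erase O₀, Eseq (seqProd (Fin.snoc g x) O)
      = ∏ O ∈ (permOrbits σ).erase O₀, Eseq (seqProd (Fin.snoc g a) O) := by
    intro x
    exact Finset.prod_congr rfl fun O hO => by rw [seqProd_snoc_notmem g x a O (hrest O hO)]
  rw [hR (aPlus a i hi), hR (aMinus a i hi)]
  have hkey := eseq_key i hi g hgnodes a O₀ hlast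
  linear_combination (-((-1 : ℝ) ^ ((permOrbits σ).card - 1))
    * ∏ O ∈ (permOrbits σ).erase O₀, Eseq (seqProd (Fin.snoc g a) O)) * hkey
end

section
/- Let f be a bounded measurable function on a probability space, let p_i = E(f^i), and let Z ∈ ℝ[[u]] be the formal power series Z = −Σ_{i ≥ 1} p_i u^i / i. Then the formal power series exp(Z) equals 1 − Σ_{n ≥ 1} E_n(f, …, f) u^n / n!; that is, the constant coefficient of exp(Z) is 1 and for every n ≥ 1 the coefficient of u^n in exp(Z) equals −E_n(f, …, f)/n!. -/
open MeasureTheory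

/-- The `n`-th coefficient of `exp(Z)` for a formal power series `Z` with zero constant
coefficient, given by the usual exponential series `exp(Z) = ∑_{k ≥ 0} Z^k / k!`.
Since `Z` has zero constant term, the coefficient of `u^n` in `Z^k` vanishes for `k > n`,
so the (coefficientwise convergent) sum may be truncated at `k = n`. -/
noncomputable def expCoeff (Z : PowerSeries ℝ) (n : ℕ) : ℝ :=
  ∑ k ∈ Finset.range (n + 1), (PowerSeries.coeff n (Z ^ k)) / (k.factorial : ℝ)

set_option linter.unusedSectionVars false
set_option maxHeartbeats 1600000

namespace Stmt18Aux
open Finset Equiv Equiv.Perm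
variable {α : Type*} [Fintype α] [DecidableEq α] {β : Type*} [Fintype β] [DecidableEq β]

def orbF (σ : Perm α) (x : α) : Finset α := Finset.univ.filter fun y => σ.SameCycle x y
lemma permOrbits_eq (σ : Perm α) : permOrbits σ = Finset.univ.image (orbF σ) := rfl
lemma mem_orbF {σ : Perm α} {x y : α} : y ∈ orbF σ x ↔ σ.SameCycle x y := by simp [orbF]
lemma self_mem_orbF (σ : Perm α) (x : α) : x ∈ orbF σ x := mem_orbF.2 (SameCycle.refl _ _)
lemma sameCycle_of_pow {σ : Perm α} {x y : α} {k : ℕ} (h : (σ ^ k) x = y) : σ.SameCycle x y :=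
  ⟨k, by simpa [zpow_natCast] using h⟩
lemma sameCycle_iff_pow {σ : Perm α} {x y : α} :
    σ.SameCycle x y ↔ ∃ k : ℕ, (σ ^ k) x = y := by
  constructor
  · intro h; obtain ⟨i, _, h⟩ := h.exists_pow_eq'; exact ⟨i, h⟩
  · rintro ⟨k, h⟩; exact sameCycle_of_pow h
lemma orbF_eq_of_sameCycle {σ : Perm α} {x y : α} (h : σ.SameCycle x y) :
    orbF σ x = orbF σ y := by
  ext z; simp only [mem_orbF]
  exact ⟨fun hz => h.symm.trans hz, fun hz => h.trans hz⟩
lemma mem_s_iff {σ : Perm α} {x₀ : α} {s : Finset α} (hs : orbF σ x₀ = s) (x : α) :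
    x ∈ s ↔ σ.SameCycle x₀ x := by rw [← hs, mem_orbF]
lemma apply_mem_s_iff {σ : Perm α} {x₀ : α} {s : Finset α} (hs : orbF σ x₀ = s) (x : α) :
    σ x ∈ s ↔ x ∈ s := by
  rw [mem_s_iff hs, mem_s_iff hs, sameCycle_apply_right]
lemma not_apply_mem_s_iff {σ : Perm α} {x₀ : α} {s : Finset α} (hs : orbF σ x₀ = s) (x : α) :
    σ x ∉ s ↔ x ∉ s := not_congr (apply_mem_s_iff hs x)
lemma coe_pow_subtypePerm {p : α → Prop} [DecidablePred p] (σ : Perm α)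
    (h : ∀ x, p (σ x) ↔ p x) (k : ℕ) (x : Subtype p) :
    (((σ.subtypePerm h) ^ k) x : α) = (σ ^ k) (x : α) := by
  rw [subtypePerm_pow]; rfl
lemma sameCycle_subtypePerm {p : α → Prop} [DecidablePred p] {σ : Perm α}
    (h : ∀ x, p (σ x) ↔ p x) (x y : Subtype p) :
    (σ.subtypePerm h).SameCycle x y ↔ σ.SameCycle (x : α) (y : α) := by
  rw [sameCycle_iff_pow, sameCycle_iff_pow]
  constructor
  · rintro ⟨k, hk⟩; exact ⟨k, by rw [← coe_pow_subtypePerm σ h k x, hk]⟩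
  · rintro ⟨k, hk⟩; exact ⟨k, Subtype.ext (by rw [coe_pow_subtypePerm σ h k x, hk])⟩

-- NEW PART

/-- The orbit of an element outside `s` is the image of the orbit in the subtype perm. -/
lemma orbF_of_not_mem {σ : Perm α} {x₀ : α} {s : Finset α} (hs : orbF σ x₀ = s)
    (x : α) (hx : x ∉ s) :
    orbF σ x = (orbF (σ.subtypePerm fun y => not_apply_mem_s_iff hs y)
      (⟨x, hx⟩ : {y // y ∉ s})).map (Function.Embedding.subtype _) := by
  ext z
  simp only [Finset.mem_map, Function.Embedding.coe_subtype, mem_orbF]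
  constructor
  · intro hz
    have hzs : z ∉ s := by
      intro hzmem
      exact hx ((mem_s_iff hs x).2 (((mem_s_iff hs z).1 hzmem).trans hz.symm))
    exact ⟨⟨z, hzs⟩, (sameCycle_subtypePerm _ _ _).2 hz, rfl⟩
  · rintro ⟨⟨z', hz'⟩, hsc, rfl⟩
    exact (sameCycle_subtypePerm _ _ _).1 hsc

lemma permOrbits_split {σ : Perm α} {x₀ : α} {s : Finset α} (hs : orbF σ x₀ = s) :
    permOrbits σ = insert s
      ((permOrbits (σ.subtypePerm (p := fun y => y ∉ s) fun y => not_apply_mem_s_iff hs y)).image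
        (Finset.map (Function.Embedding.subtype _))) := by
  ext O
  simp only [permOrbits_eq, Finset.mem_insert, Finset.mem_image, Finset.mem_univ, true_and]
  constructor
  · rintro ⟨x, rfl⟩
    by_cases hx : x ∈ s
    · left
      rw [← hs]; exact (orbF_eq_of_sameCycle ((mem_s_iff hs x).1 hx)).symm
    · right
      exact ⟨orbF _ ⟨x, hx⟩, ⟨⟨x, hx⟩, rfl⟩, (orbF_of_not_mem hs x hx).symm⟩
  · rintro (rfl | ⟨O', ⟨⟨x, hx⟩, rfl⟩, rfl⟩)
    · exact ⟨x₀, hs⟩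
    · exact ⟨x, orbF_of_not_mem hs x hx⟩

lemma W_split (a : ℕ → ℝ) {σ : Perm α} {x₀ : α} {s : Finset α} (hs : orbF σ x₀ = s) :
    ∏ O ∈ permOrbits σ, a O.card
      = a s.card *
        ∏ O ∈ permOrbits (σ.subtypePerm (p := fun y => y ∉ s) fun y => not_apply_mem_s_iff hs y), a O.card := by
  rw [permOrbits_split hs, Finset.prod_insert, Finset.prod_image]
  · congr 1
    exact Finset.prod_congr rfl fun O _ => by rw [Finset.card_map]
  · intro x _ y _ h
    exact Finset.map_injective _ h
  · -- s is not in the image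
    simp only [Finset.mem_image]
    rintro ⟨O', hO', hOs⟩
    have hx₀s : x₀ ∈ s := hs ▸ self_mem_orbF σ x₀
    have hx₀ : x₀ ∈ O'.map (Function.Embedding.subtype fun x => x ∉ s) := by
      rw [hOs]; exact hx₀s
    obtain ⟨y, _, hy⟩ := Finset.mem_map.1 hx₀
    have hyx : (y : α) = x₀ := hy
    exact y.2 (hyx ▸ hx₀s)

-- congruence under relabeling
lemma pow_permCongr (e : β ≃ α) (τ : Perm β) (k : ℕ) (x : β) :
    ((e.permCongr τ) ^ k) (e x) = e ((τ ^ k) x) := by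
  induction k generalizing x with
  | zero => simp
  | succ k ih =>
    rw [pow_succ', pow_succ', Perm.mul_apply, Perm.mul_apply, Equiv.permCongr_apply,
      ih x, Equiv.symm_apply_apply]

lemma orbF_permCongr (e : β ≃ α) (τ : Perm β) (x : β) :
    orbF (e.permCongr τ) (e x) = (orbF τ x).image e := by
  ext z
  simp only [Finset.mem_image, mem_orbF]
  constructor
  · intro hz
    rw [sameCycle_iff_pow] at hz
    obtain ⟨k, hk⟩ := hz
    exact ⟨(τ ^ k) x, sameCycle_of_pow rfl, by rw [← pow_permCongr e τ k x, hk]⟩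
  · rintro ⟨y, hy, rfl⟩
    rw [sameCycle_iff_pow] at hy ⊢
    obtain ⟨k, hk⟩ := hy
    exact ⟨k, by rw [pow_permCongr e τ k x, hk]⟩

lemma permOrbits_permCongr (e : β ≃ α) (τ : Perm β) :
    permOrbits (e.permCongr τ) = (permOrbits τ).image (Finset.image e) := by
  rw [permOrbits_eq, permOrbits_eq, Finset.image_image]
  have huniv : (Finset.univ : Finset α) = Finset.univ.image e := by
    ext x
    constructor
    · intro _
      exact Finset.mem_image.2 ⟨e.symm x, Finset.mem_univ _, e.apply_symm_apply x⟩
    · intro _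
      exact Finset.mem_univ _
  conv_lhs => rw [huniv, Finset.image_image]
  apply Finset.image_congr
  intro x _
  simp only [Function.comp_apply]
  exact orbF_permCongr e τ x

lemma W_congr (a : ℕ → ℝ) (e : β ≃ α) (τ : Perm β) :
    ∏ O ∈ permOrbits (e.permCongr τ), a O.card = ∏ O ∈ permOrbits τ, a O.card := by
  rw [permOrbits_permCongr, Finset.prod_image]
  · exact Finset.prod_congr rfl fun O _ => by
      rw [Finset.card_image_of_injective _ e.injective]
  · intro x _ y _ h
    exact Finset.image_injective e.injective h

/-- The sum of cycle weights over all permutations of `Fin n`. -/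
noncomputable def T (a : ℕ → ℝ) (n : ℕ) : ℝ :=
  ∑ σ : Perm (Fin n), ∏ O ∈ permOrbits σ, a O.card

lemma sum_W_eq_T (a : ℕ → ℝ) {n : ℕ} (h : Fintype.card β = n) :
    ∑ σ : Perm β, ∏ O ∈ permOrbits σ, a O.card = T a n := by
  obtain e : β ≃ Fin n := Fintype.equivFinOfCardEq h
  rw [T]
  exact Fintype.sum_equiv e.permCongr _ _ fun σ => (W_congr a e σ).symm



lemma card_pointed_equiv (x₀ : β) (m : ℕ) (h : Fintype.card β = m + 1) :
    (Finset.univ.filter fun e : β ≃ Fin (m + 1) => e x₀ = 0).card = m.factorial := by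
  have key : (Finset.univ : Finset (β ≃ Fin (m + 1))).card
      = ((Finset.univ : Finset (Fin (m + 1))) ×ˢ
          (Finset.univ.filter fun e : β ≃ Fin (m + 1) => e x₀ = 0)).card := by
    refine Finset.card_bij' (fun e _ => (e x₀, e.trans (Equiv.subRight (e x₀))))
      (fun p _ => p.2.trans (Equiv.addRight p.1)) ?_ ?_ ?_ ?_
    · intro e _
      simp only [Finset.mem_product, Finset.mem_univ, true_and, Finset.mem_filter]
      simp [Equiv.trans_apply, Equiv.subRight_apply]
    · intro p _
      exact Finset.mem_univ _
    · intro e _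
      ext x
      simp [Equiv.trans_apply, Equiv.subRight_apply, Equiv.coe_addRight]
    · intro p hp
      simp only [Finset.mem_product, Finset.mem_univ, true_and, Finset.mem_filter] at hp
      have h1 : (p.2.trans (Equiv.addRight p.1)) x₀ = p.1 := by
        simp [Equiv.trans_apply, Equiv.coe_addRight, hp]
      have h2 : (p.2.trans (Equiv.addRight p.1)).trans
          (Equiv.subRight ((p.2.trans (Equiv.addRight p.1)) x₀)) = p.2 := by
        rw [h1]
        ext x
        simp [Equiv.trans_apply, Equiv.coe_addRight, Equiv.subRight_apply]
      exact Prod.ext h1 h2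
  have hcard : (Finset.univ : Finset (β ≃ Fin (m + 1))).card = (m + 1).factorial := by
    rw [Finset.card_univ, Fintype.card_equiv (Fintype.equivFinOfCardEq h), h]
  rw [hcard, Finset.card_product, Finset.card_univ, Fintype.card_fin,
    Nat.factorial_succ] at key
  exact (Nat.eq_of_mul_eq_mul_left (Nat.succ_pos m) key.symm)

/-- the rotation permutation attached to a labeling -/
def rotOf (m : ℕ) (e : β ≃ Fin (m + 1)) : Perm β := (e.trans (finRotate (m + 1))).trans e.symm

lemma rotOf_apply (m : ℕ) (e : β ≃ Fin (m + 1)) (x : β) :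
    rotOf m e x = e.symm (e x + 1) := by
  simp [rotOf, Equiv.trans_apply, finRotate_succ_apply]

open Fin.NatCast in
lemma rotOf_pow (m : ℕ) (e : β ≃ Fin (m + 1)) (k : ℕ) (x : β) :
    ((rotOf m e) ^ k) x = e.symm (e x + (k : Fin (m + 1))) := by
  induction k generalizing x with
  | zero => simp
  | succ k ih =>
    rw [pow_succ, Perm.mul_apply, rotOf_apply, ih]
    rw [Equiv.apply_symm_apply]
    congr 1
    push_cast
    rw [add_assoc, add_comm (1 : Fin (m + 1))]


lemma isCycleOn_univ_of_trans (c : Perm β) (x₀ : β) (hc : ∀ y, c.SameCycle x₀ y) :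
    c.IsCycleOn ((Finset.univ : Finset β) : Set β) := by
  constructor
  · rw [Finset.coe_univ]
    exact Set.bijOn_univ.2 c.bijective
  · intro x _ y _
    exact (hc x).symm.trans (hc y)

lemma bij_pow_apply (x₀ : β) (m : ℕ) (h : Fintype.card β = m + 1) (c : Perm β)
    (hc : ∀ y, c.SameCycle x₀ y) :
    Function.Bijective (fun j : Fin (m + 1) => (c ^ (j : ℕ)) x₀) := by
  rw [Fintype.bijective_iff_injective_and_card]
  refine ⟨?_, by simp [h]⟩
  intro j j' hjj
  have hco := isCycleOn_univ_of_trans c x₀ hc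
  have hcard : (Finset.univ : Finset β).card = m + 1 := by rw [Finset.card_univ, h]
  have hmod := (hco.pow_apply_eq_pow_apply (Finset.mem_univ x₀)).1 hjj
  rw [hcard] at hmod
  have hmod2 : (j : ℕ) % (m + 1) = (j' : ℕ) % (m + 1) := hmod
  rw [Nat.mod_eq_of_lt j.isLt, Nat.mod_eq_of_lt j'.isLt] at hmod2
  exact Fin.ext hmod2

open Fin.NatCast in
lemma card_transitive (x₀ : β) (m : ℕ) (h : Fintype.card β = m + 1) :
    (Finset.univ.filter fun c : Perm β => ∀ y, c.SameCycle x₀ y).card = m.factorial := by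
  rw [← card_pointed_equiv x₀ m h]
  refine Finset.card_bij'
    (fun c hc => (Equiv.ofBijective _
      (bij_pow_apply x₀ m h c (Finset.mem_filter.1 hc).2)).symm)
    (fun e _ => rotOf m e) ?_ ?_ ?_ ?_
  · intro c hc
    rw [Finset.mem_filter]
    refine ⟨Finset.mem_univ _, ?_⟩
    rw [Equiv.symm_apply_eq]
    show x₀ = (c ^ ((0 : Fin (m + 1)) : ℕ)) x₀
    simp
  · intro e he
    rw [Finset.mem_filter] at he ⊢
    refine ⟨Finset.mem_univ _, fun y => ?_⟩
    refine sameCycle_of_pow (k := ((e y : ℕ))) ?_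
    rw [rotOf_pow, he.2, zero_add, Fin.cast_val_eq_self, Equiv.symm_apply_apply]
  · intro c hc
    have hctrans := (Finset.mem_filter.1 hc).2
    have hco := isCycleOn_univ_of_trans c x₀ hctrans
    have hcard : (Finset.univ : Finset β).card = m + 1 := by rw [Finset.card_univ, h]
    set E := (Equiv.ofBijective _ (bij_pow_apply x₀ m h c hctrans)).symm with hE
    ext x
    rw [rotOf_apply]
    have hEsymm : ∀ j : Fin (m + 1), E.symm j = (c ^ (j : ℕ)) x₀ := fun j => rfl
    have hx : x = (c ^ ((E x : ℕ))) x₀ := by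
      rw [← hEsymm (E x), Equiv.symm_apply_apply]
    have h1 : ((E x + 1 : Fin (m + 1)) : ℕ) ≡ (E x : ℕ) + 1 [MOD (Finset.univ : Finset β).card] := by
      rw [hcard, Fin.val_add, Fin.val_one']
      exact (Nat.mod_modEq _ _).trans ((Nat.ModEq.refl _).add (Nat.mod_modEq 1 (m + 1)))
    have h2 := (hco.pow_apply_eq_pow_apply (Finset.mem_univ x₀)).2 h1
    rw [hEsymm, h2, pow_succ', Perm.mul_apply, ← hx]
  · intro e he
    have hpt := (Finset.mem_filter.1 he).2
    apply Equiv.ext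
    intro x
    rw [Equiv.symm_apply_eq]
    show x = ((rotOf m e) ^ ((e x : ℕ))) x₀
    rw [rotOf_pow, hpt, zero_add, Fin.cast_val_eq_self, Equiv.symm_apply_apply]

section FiberSum
variable (a : ℕ → ℝ)

lemma mul_apply_of_mem {s : Finset α} (c : Perm {x // x ∈ s}) (τ : Perm {x // x ∉ s})
    {x : α} (hx : x ∈ s) :
    (Equiv.Perm.ofSubtype c * Equiv.Perm.ofSubtype τ) x = ((c ⟨x, hx⟩ : {x // x ∈ s}) : α) := by
  rw [Perm.mul_apply, Equiv.Perm.ofSubtype_apply_of_not_mem τ (by simp [hx]),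
    Equiv.Perm.ofSubtype_apply_of_mem c hx]

lemma mul_apply_of_not_mem {s : Finset α} (c : Perm {x // x ∈ s}) (τ : Perm {x // x ∉ s})
    {x : α} (hx : x ∉ s) :
    (Equiv.Perm.ofSubtype c * Equiv.Perm.ofSubtype τ) x = ((τ ⟨x, hx⟩ : {x // x ∉ s}) : α) := by
  rw [Perm.mul_apply, Equiv.Perm.ofSubtype_apply_of_mem τ hx,
    Equiv.Perm.ofSubtype_apply_of_not_mem c (by exact (τ ⟨x, hx⟩).2)]

lemma mul_mem_iff {s : Finset α} (c : Perm {x // x ∈ s}) (τ : Perm {x // x ∉ s}) (x : α) :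
    (Equiv.Perm.ofSubtype c * Equiv.Perm.ofSubtype τ) x ∈ s ↔ x ∈ s := by
  by_cases hx : x ∈ s
  · simp only [hx, iff_true]
    rw [mul_apply_of_mem c τ hx]
    exact (c ⟨x, hx⟩).2
  · simp only [hx, iff_false]
    rw [mul_apply_of_not_mem c τ hx]
    exact (τ ⟨x, hx⟩).2

lemma subtypePerm_mul_fst {s : Finset α} (c : Perm {x // x ∈ s}) (τ : Perm {x // x ∉ s}) :
    (Equiv.Perm.ofSubtype c * Equiv.Perm.ofSubtype τ).subtypePerm (mul_mem_iff c τ) = c := by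
  apply Equiv.ext
  intro x
  apply Subtype.ext
  rw [subtypePerm_apply]
  exact mul_apply_of_mem c τ x.2

lemma subtypePerm_mul_snd {s : Finset α} (c : Perm {x // x ∈ s}) (τ : Perm {x // x ∉ s}) :
    (Equiv.Perm.ofSubtype c * Equiv.Perm.ofSubtype τ).subtypePerm
      (fun x => not_congr (mul_mem_iff c τ x)) = τ := by
  apply Equiv.ext
  intro x
  apply Subtype.ext
  rw [subtypePerm_apply]
  exact mul_apply_of_not_mem c τ x.2

lemma orbF_mul_eq {s : Finset α} {x₀ : α} (hx₀ : x₀ ∈ s)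
    (c : Perm {x // x ∈ s}) (τ : Perm {x // x ∉ s})
    (hc : ∀ y, c.SameCycle ⟨x₀, hx₀⟩ y) :
    orbF (Equiv.Perm.ofSubtype c * Equiv.Perm.ofSubtype τ) x₀ = s := by
  set σ' := Equiv.Perm.ofSubtype c * Equiv.Perm.ofSubtype τ with hσ'
  ext y
  rw [mem_orbF]
  constructor
  · intro hsc
    obtain ⟨k, hk⟩ := sameCycle_iff_pow.1 hsc
    have : (σ' ^ k) x₀ = ((((σ'.subtypePerm (mul_mem_iff c τ)) ^ k) ⟨x₀, hx₀⟩ : {x // x ∈ s}) : α) :=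
      (coe_pow_subtypePerm σ' (mul_mem_iff c τ) k ⟨x₀, hx₀⟩).symm
    rw [hk] at this
    rw [this]
    exact (((σ'.subtypePerm (mul_mem_iff c τ)) ^ k) ⟨x₀, hx₀⟩).2
  · intro hy
    have := hc ⟨y, hy⟩
    rw [← subtypePerm_mul_fst c τ] at this
    exact (sameCycle_subtypePerm (mul_mem_iff c τ) ⟨x₀, hx₀⟩ ⟨y, hy⟩).1 this

lemma fiber_sum {s : Finset α} {x₀ : α} (hx₀ : x₀ ∈ s) :
    ∑ σ ∈ Finset.univ.filter (fun σ : Perm α => orbF σ x₀ = s),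
        ∏ O ∈ permOrbits σ, a O.card
      = ((s.card - 1).factorial : ℝ) * a s.card *
        ∑ τ : Perm {x // x ∉ s}, ∏ O ∈ permOrbits τ, a O.card := by
  have key : ∑ σ ∈ Finset.univ.filter (fun σ : Perm α => orbF σ x₀ = s),
        ∏ O ∈ permOrbits σ, a O.card
      = ∑ p ∈ (Finset.univ.filter
            fun c : Perm {x // x ∈ s} => ∀ y, c.SameCycle ⟨x₀, hx₀⟩ y) ×ˢ
          (Finset.univ : Finset (Perm {x // x ∉ s})),
          a s.card * ∏ O ∈ permOrbits p.2, a O.card := by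
    refine Finset.sum_bij'
      (fun σ hσ => (σ.subtypePerm fun x =>
          apply_mem_s_iff (Finset.mem_filter.1 hσ).2 x,
        σ.subtypePerm fun x => not_apply_mem_s_iff (Finset.mem_filter.1 hσ).2 x))
      (fun p _ => Equiv.Perm.ofSubtype p.1 * Equiv.Perm.ofSubtype p.2) ?_ ?_ ?_ ?_ ?_
    · intro σ hσ
      have hs := (Finset.mem_filter.1 hσ).2
      simp only [Finset.mem_product, Finset.mem_filter, Finset.mem_univ, true_and, and_true]
      intro y
      exact (sameCycle_subtypePerm _ ⟨x₀, hx₀⟩ y).2 ((mem_s_iff hs _).1 y.2)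
    · intro p hp
      simp only [Finset.mem_product, Finset.mem_filter, Finset.mem_univ, true_and,
        and_true] at hp
      rw [Finset.mem_filter]
      exact ⟨Finset.mem_univ _, orbF_mul_eq hx₀ p.1 p.2 hp⟩
    · intro σ hσ
      have hs := (Finset.mem_filter.1 hσ).2
      apply Equiv.ext
      intro x
      by_cases hx : x ∈ s
      · rw [mul_apply_of_mem _ _ hx, subtypePerm_apply]
      · rw [mul_apply_of_not_mem _ _ hx, subtypePerm_apply]
    · intro p hp
      exact Prod.ext (subtypePerm_mul_fst p.1 p.2) (subtypePerm_mul_snd p.1 p.2)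
    · intro σ hσ
      exact W_split a (Finset.mem_filter.1 hσ).2
  rw [key, Finset.sum_product]
  have hconst : ∀ c : Perm {x // x ∈ s},
      (∑ τ : Perm {x // x ∉ s}, a s.card * ∏ O ∈ permOrbits ((c, τ)).2, a O.card)
      = a s.card * ∑ τ : Perm {x // x ∉ s}, ∏ O ∈ permOrbits τ, a O.card := fun c => by
    rw [Finset.mul_sum]
  rw [Finset.sum_congr rfl fun c _ => hconst c, Finset.sum_const]
  have hm : Fintype.card {x // x ∈ s} = (s.card - 1) + 1 := by
    rw [Fintype.card_coe]
    have : 1 ≤ s.card := Finset.card_pos.2 ⟨x₀, hx₀⟩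
    omega
  rw [card_transitive ⟨x₀, hx₀⟩ (s.card - 1) hm, nsmul_eq_mul, mul_assoc]

end FiberSum

section Count

lemma card_sets_zero_mem (n i : ℕ) :
    ((Finset.univ : Finset (Finset (Fin (n + 1)))).filter
      fun s => (0 : Fin (n + 1)) ∈ s ∧ s.card = i + 1).card = n.choose i := by
  have hcard : (Finset.univ.erase (0 : Fin (n + 1))).card = n := by
    rw [Finset.card_erase_of_mem (Finset.mem_univ _), Finset.card_univ, Fintype.card_fin]
    omega
  have hpc : (Finset.powersetCard i (Finset.univ.erase (0 : Fin (n + 1)))).card = n.choose i := by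
    rw [Finset.card_powersetCard, hcard]
  rw [← hpc]
  refine Finset.card_bij' (fun s _ => s.erase 0) (fun t _ => insert 0 t) ?_ ?_ ?_ ?_
  · intro s hs
    rw [Finset.mem_filter] at hs
    rw [Finset.mem_powersetCard]
    constructor
    · exact Finset.erase_subset_erase _ (Finset.subset_univ s)
    · rw [Finset.card_erase_of_mem hs.2.1, hs.2.2]
      omega
  · intro t ht
    rw [Finset.mem_powersetCard] at ht
    have h0 : (0 : Fin (n + 1)) ∉ t := fun h =>
      Finset.notMem_erase _ _ (ht.1 h)
    rw [Finset.mem_filter]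
    exact ⟨Finset.mem_univ _, Finset.mem_insert_self _ _,
      by rw [Finset.card_insert_of_notMem h0, ht.2]⟩
  · intro s hs
    rw [Finset.mem_filter] at hs
    exact Finset.insert_erase hs.2.1
  · intro t ht
    rw [Finset.mem_powersetCard] at ht
    exact Finset.erase_insert fun h => Finset.notMem_erase _ _ (ht.1 h)

end Count

lemma T_zero (a : ℕ → ℝ) : T a 0 = 1 := by
  rw [T]
  have h1 : ∀ σ : Perm (Fin 0), ∏ O ∈ permOrbits σ, a O.card = 1 := by
    intro σ
    rw [permOrbits_eq]
    rw [show (Finset.univ : Finset (Fin 0)) = ∅ from rfl]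
    rw [Finset.image_empty, Finset.prod_empty]
  rw [Finset.sum_congr rfl fun σ _ => h1 σ, Finset.sum_const, Finset.card_univ]
  simp

lemma T_rec (a : ℕ → ℝ) (n : ℕ) :
    T a (n + 1) = ∑ i ∈ Finset.range (n + 1),
      ((n.choose i * i.factorial : ℕ) : ℝ) * a (i + 1) * T a (n - i) := by
  rw [T]
  rw [← Finset.sum_fiberwise_of_maps_to (g := fun σ : Perm (Fin (n + 1)) => orbF σ 0)
      (t := (Finset.univ : Finset (Finset (Fin (n + 1)))).filter fun s => (0 : Fin (n + 1)) ∈ s)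
      (fun σ _ => Finset.mem_filter.2 ⟨Finset.mem_univ _, self_mem_orbF σ 0⟩)]
  have step1 : ∀ s ∈ (Finset.univ : Finset (Finset (Fin (n + 1)))).filter
        (fun s => (0 : Fin (n + 1)) ∈ s),
      (∑ σ ∈ Finset.univ.filter (fun σ : Perm (Fin (n + 1)) => orbF σ 0 = s),
        ∏ O ∈ permOrbits σ, a O.card)
      = ((s.card - 1).factorial : ℝ) * a s.card * T a (n + 1 - s.card) := by
    intro s hs
    have hx₀ : (0 : Fin (n + 1)) ∈ s := (Finset.mem_filter.1 hs).2
    rw [fiber_sum a hx₀]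
    congr 1
    apply sum_W_eq_T
    have h1 : Fintype.card {x : Fin (n + 1) // x ∈ s} = s.card := Fintype.card_coe s
    have h2 := Fintype.card_subtype_compl (fun x : Fin (n + 1) => x ∈ s)
    rw [h1, Fintype.card_fin] at h2
    exact h2
  rw [Finset.sum_congr rfl step1]
  rw [← Finset.sum_fiberwise_of_maps_to (g := fun s : Finset (Fin (n + 1)) => s.card - 1)
      (t := Finset.range (n + 1)) ?_]
  · apply Finset.sum_congr rfl
    intro i hi
    have step2 : ∀ s ∈ ((Finset.univ : Finset (Finset (Fin (n + 1)))).filter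
          fun s => (0 : Fin (n + 1)) ∈ s).filter (fun s => s.card - 1 = i),
        ((s.card - 1).factorial : ℝ) * a s.card * T a (n + 1 - s.card)
        = (i.factorial : ℝ) * a (i + 1) * T a (n - i) := by
      intro s hs
      rw [Finset.mem_filter, Finset.mem_filter] at hs
      have hpos : 1 ≤ s.card := Finset.card_pos.2 ⟨0, hs.1.2⟩
      have hcard : s.card = i + 1 := by omega
      have hsub : n + 1 - (i + 1) = n - i := by omega
      rw [hcard, Nat.add_sub_cancel, hsub]
    rw [Finset.sum_congr rfl step2, Finset.sum_const]
    have hfilt : ((Finset.univ : Finset (Finset (Fin (n + 1)))).filter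
          fun s => (0 : Fin (n + 1)) ∈ s).filter (fun s => s.card - 1 = i)
        = (Finset.univ : Finset (Finset (Fin (n + 1)))).filter
          fun s => (0 : Fin (n + 1)) ∈ s ∧ s.card = i + 1 := by
      rw [Finset.filter_filter]
      apply Finset.filter_congr
      intro s _
      constructor
      · rintro ⟨h1, h2⟩
        have : 1 ≤ s.card := Finset.card_pos.2 ⟨0, h1⟩
        exact ⟨h1, by omega⟩
      · rintro ⟨h1, h2⟩
        exact ⟨h1, by omega⟩
    rw [hfilt, card_sets_zero_mem n i, nsmul_eq_mul]
    push_cast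
    ring
  · intro s hs
    rw [Finset.mem_filter] at hs
    have h1 : 1 ≤ s.card := Finset.card_pos.2 ⟨0, hs.2⟩
    have h2 : s.card ≤ n + 1 := by
      have := Finset.card_le_univ s
      rwa [Fintype.card_fin] at this
    rw [Finset.mem_range]
    show s.card - 1 < n + 1
    omega

section Analytic
open PowerSeries

noncomputable def Zser (a : ℕ → ℝ) : PowerSeries ℝ :=
  PowerSeries.mk fun i => if i = 0 then 0 else a i / (i : ℝ)

variable (a : ℕ → ℝ)

lemma coeff_Zser_zero : PowerSeries.coeff 0 (Zser a) = 0 := by simp [Zser]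

lemma coeff_Zser_succ (i : ℕ) :
    PowerSeries.coeff (i + 1) (Zser a) = a (i + 1) / ((i : ℝ) + 1) := by
  simp [Zser]

lemma coeff_pow_zero_lt : ∀ k m : ℕ, m < k → PowerSeries.coeff m ((Zser a) ^ k) = 0 := by
  intro k
  induction k with
  | zero => intro m hm; omega
  | succ k ih =>
    intro m hm
    rw [pow_succ', PowerSeries.coeff_mul]
    apply Finset.sum_eq_zero
    intro p hp
    rw [Finset.HasAntidiagonal.mem_antidiagonal] at hp
    rcases Nat.eq_zero_or_pos p.1 with h1 | h1
    · rw [h1, coeff_Zser_zero, zero_mul]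
    · rw [ih p.2 (by omega), mul_zero]

lemma expCoeff_Zser_zero : expCoeff (Zser a) 0 = 1 := by
  simp [expCoeff]

lemma expCoeff_eq_sum {m N : ℕ} (h : m ≤ N) :
    ∑ k ∈ Finset.range (N + 1), PowerSeries.coeff m ((Zser a) ^ k) / (k.factorial : ℝ)
      = expCoeff (Zser a) m := by
  rw [expCoeff]
  symm
  apply Finset.sum_subset
  · intro k hk
    rw [Finset.mem_range] at hk ⊢
    omega
  · intro k _ hk
    rw [Finset.mem_range] at hk
    rw [coeff_pow_zero_lt a k m (by omega), zero_div]

lemma coeff_deriv_Zser (i : ℕ) :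
    PowerSeries.coeff i (d⁄dX ℝ (Zser a)) = a (i + 1) := by
  rw [PowerSeries.coeff_derivative, coeff_Zser_succ]
  have h : ((i : ℝ) + 1) ≠ 0 := by positivity
  push_cast
  field_simp

lemma expCoeff_rec (n : ℕ) :
    ((n : ℝ) + 1) * expCoeff (Zser a) (n + 1)
      = ∑ i ∈ Finset.range (n + 1), a (i + 1) * expCoeff (Zser a) (n - i) := by
  have hderiv : ∀ k, ((n : ℝ) + 1) * PowerSeries.coeff (n + 1) ((Zser a) ^ k)
      = PowerSeries.coeff n (d⁄dX ℝ ((Zser a) ^ k)) := by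
    intro k
    rw [PowerSeries.coeff_derivative]
    push_cast
    ring
  have hstep : ∀ j : ℕ, PowerSeries.coeff n (d⁄dX ℝ ((Zser a) ^ (j + 1)))
        / ((j + 1).factorial : ℝ)
      = ∑ i ∈ Finset.range (n + 1),
          a (i + 1) * (PowerSeries.coeff (n - i) ((Zser a) ^ j) / (j.factorial : ℝ)) := by
    intro j
    have e1 : d⁄dX ℝ ((Zser a) ^ (j + 1))
        = (j + 1) • ((Zser a) ^ j • d⁄dX ℝ (Zser a)) := by
      have := Derivation.leibniz_pow (D := d⁄dX ℝ) (a := Zser a) (j + 1)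
      simpa using this
    rw [e1, map_nsmul, nsmul_eq_mul, smul_eq_mul]
    have e2 : PowerSeries.coeff n ((Zser a) ^ j * d⁄dX ℝ (Zser a))
        = ∑ i ∈ Finset.range (n + 1),
            a (i + 1) * PowerSeries.coeff (n - i) ((Zser a) ^ j) := by
      rw [mul_comm, PowerSeries.coeff_mul, Finset.Nat.sum_antidiagonal_eq_sum_range_succ_mk]
      apply Finset.sum_congr rfl
      intro i _
      rw [coeff_deriv_Zser]
    rw [e2, Nat.factorial_succ]
    rw [Finset.mul_sum, Finset.sum_div]
    apply Finset.sum_congr rfl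
    intro i _
    have hj1 : ((j : ℝ) + 1) ≠ 0 := by positivity
    have hjf : ((j.factorial : ℝ)) ≠ 0 := Nat.cast_ne_zero.2 j.factorial_ne_zero
    push_cast
    field_simp
  rw [expCoeff, Finset.mul_sum]
  have hsplit : ∀ k ∈ Finset.range (n + 2),
      ((n : ℝ) + 1) * (PowerSeries.coeff (n + 1) ((Zser a) ^ k) / (k.factorial : ℝ))
      = PowerSeries.coeff n (d⁄dX ℝ ((Zser a) ^ k)) / (k.factorial : ℝ) := by
    intro k _
    rw [← hderiv k]
    ring
  rw [Finset.sum_congr rfl hsplit, Finset.sum_range_succ']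
  have hzero : PowerSeries.coeff n (d⁄dX ℝ ((Zser a) ^ 0)) / ((0).factorial : ℝ) = 0 := by
    rw [pow_zero]
    have : d⁄dX ℝ (1 : PowerSeries ℝ) = 0 := Derivation.map_one_eq_zero _
    rw [this, map_zero, zero_div]
  rw [hzero, add_zero, Finset.sum_congr rfl fun j _ => hstep j, Finset.sum_comm]
  apply Finset.sum_congr rfl
  intro i hi
  rw [Finset.mem_range] at hi
  rw [← Finset.mul_sum]
  congr 1
  exact expCoeff_eq_sum a (by omega)

end Analytic

lemma expCoeff_eq_T (a : ℕ → ℝ) : ∀ n : ℕ, expCoeff (Zser a) n = T a n / (n.factorial : ℝ) := by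
  intro n
  induction n using Nat.strong_induction_on with
  | _ n ih =>
    match n with
    | 0 =>
      rw [expCoeff_Zser_zero, T_zero]
      norm_num
    | (n + 1) =>
      have hpos : ((n : ℝ) + 1) ≠ 0 := by positivity
      have hform : expCoeff (Zser a) (n + 1)
          = (∑ i ∈ Finset.range (n + 1),
              a (i + 1) * (T a (n - i) / ((n - i).factorial : ℝ))) / ((n : ℝ) + 1) := by
        rw [eq_div_iff hpos, mul_comm, expCoeff_rec a n]
        apply Finset.sum_congr rfl
        intro i hi
        rw [ih (n - i) (by omega)]
      rw [hform, T_rec, Finset.sum_div, Finset.sum_div]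
      apply Finset.sum_congr rfl
      intro i hi
      rw [Finset.mem_range] at hi
      have hni : i ≤ n := by omega
      have hfact : (n.choose i) * i.factorial * (n - i).factorial = n.factorial :=
        Nat.choose_mul_factorial_mul_factorial hni
      have hfc : ((n.choose i : ℝ)) * (i.factorial : ℝ) * ((n - i).factorial : ℝ)
          = (n.factorial : ℝ) := by exact_mod_cast congrArg (Nat.cast : ℕ → ℝ) hfact
      have h1 : ((n - i).factorial : ℝ) ≠ 0 := Nat.cast_ne_zero.2 (Nat.factorial_ne_zero _)
      have h3 : ((n.factorial : ℕ) : ℝ) ≠ 0 := Nat.cast_ne_zero.2 (Nat.factorial_ne_zero _)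
      rw [Nat.factorial_succ]
      push_cast
      field_simp
      linear_combination (-(a (i + 1) * T a (n - i))) * hfc

open MeasureTheory in
lemma T_eq_neg_En {Ω : Type*} [MeasurableSpace Ω] (μ : Measure Ω) (f : Ω → ℝ) {n : ℕ}
    (hn : 1 ≤ n) :
    T (fun i => -(∫ ω, (f ω) ^ i ∂μ)) n = -(En μ (fun _ : Fin n => f)) := by
  rw [T, En, ← Finset.sum_neg_distrib]
  apply Finset.sum_congr rfl
  intro σ _
  have hne : (orbF σ (⟨0, hn⟩ : Fin n)) ∈ permOrbits σ := by
    rw [permOrbits_eq]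
    exact Finset.mem_image_of_mem _ (Finset.mem_univ _)
  have hcard : 1 ≤ (permOrbits σ).card := Finset.card_pos.2 ⟨_, hne⟩
  have hpermE : permE μ (fun _ : Fin n => f) σ
      = ∏ O ∈ permOrbits σ, ∫ ω, (f ω) ^ O.card ∂μ := by
    rw [permE]
    apply Finset.prod_congr rfl
    intro O _
    congr 1
    funext ω
    rw [Finset.prod_const]
  rw [hpermE]
  have hsplit : ∏ O ∈ permOrbits σ, -(∫ ω, (f ω) ^ O.card ∂μ)
      = (-1 : ℝ) ^ (permOrbits σ).card * ∏ O ∈ permOrbits σ, ∫ ω, (f ω) ^ O.card ∂μ := by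
    rw [← Finset.prod_const, ← Finset.prod_mul_distrib]
    apply Finset.prod_congr rfl
    intro O _
    ring
  rw [hsplit]
  have hc1 : (permOrbits σ).card = ((permOrbits σ).card - 1) + 1 := by omega
  have hpow : (-1 : ℝ) ^ (permOrbits σ).card = -(-1 : ℝ) ^ ((permOrbits σ).card - 1) := by
    conv_lhs => rw [hc1]
    rw [pow_succ]
    ring
  rw [hpow]
  ring

end Stmt18Aux

/-- Let `f` be a bounded measurable function on a probability space,
`pᵢ = E(fⁱ)`, and `Z = −∑_{i ≥ 1} pᵢ uⁱ / i ∈ ℝ[[u]]`.  Then `exp(Z)` equals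
`1 − ∑_{n ≥ 1} E_n(f,…,f) uⁿ / n!`: the constant coefficient of `exp(Z)` is `1`, and for
every `n ≥ 1` the coefficient of `uⁿ` in `exp(Z)` equals `−E_n(f,…,f)/n!`. -/
theorem stmt_18 {Ω : Type*} [MeasurableSpace Ω] (μ : Measure Ω) [IsProbabilityMeasure μ]
    (f : Ω → ℝ) (hmeas : Measurable f) (hbdd : ∃ C, ∀ ω, |f ω| ≤ C)
    (Z : PowerSeries ℝ)
    (hZ : Z = PowerSeries.mk fun i =>
      if i = 0 then 0 else -(∫ ω, (f ω) ^ i ∂μ) / (i : ℝ)) :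
    expCoeff Z 0 = 1 ∧
    ∀ n : ℕ, 1 ≤ n →
      expCoeff Z n = -(En μ (fun _ : Fin n => f)) / (n.factorial : ℝ) := by
  classical
  have hZa : Z = Stmt18Aux.Zser (fun i => -(∫ ω, (f ω) ^ i ∂μ)) := by rw [hZ]; rfl
  constructor
  · rw [hZa]
    exact Stmt18Aux.expCoeff_Zser_zero _
  · intro n hn
    rw [hZa, Stmt18Aux.expCoeff_eq_T, Stmt18Aux.T_eq_neg_En μ f hn]
end

section
/- Let p_1, …, p_n be distinct primes, let k = p_1 p_2 ⋯ p_n, let k_j = k / p_j for 1 ≤ j ≤ n, and let N = k_1 + ⋯ + k_n. If s_1, …, s_n are nonnegative integers with s_1 k_1 + ⋯ + s_n k_n = N, then s_1 = s_2 = ⋯ = s_n = 1. -/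
/-- Let `p₁,…,pₙ` be distinct primes, `k = p₁⋯pₙ`, `kⱼ = k / pⱼ`, and
`N = k₁ + ⋯ + kₙ`.  If `s₁,…,sₙ` are nonnegative integers with `s₁k₁ + ⋯ + sₙkₙ = N`,
then `s₁ = ⋯ = sₙ = 1`. -/
theorem stmt_19 (n : ℕ) (p : Fin n → ℕ) (hp : ∀ j, (p j).Prime)
    (hdist : Function.Injective p) (s : Fin n → ℕ)
    (hs : ∑ j, s j * ((∏ i, p i) / p j) = ∑ j, (∏ i, p i) / p j) :
    ∀ j, s j = 1 := by
  classical
  set K : Fin n → ℕ := fun j => ∏ i ∈ Finset.univ.erase j, p i with hKdef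
  have hk : ∀ j, (∏ i, p i) / p j = K j := by
    intro j
    rw [← Finset.mul_prod_erase Finset.univ p (Finset.mem_univ j),
      Nat.mul_div_cancel_left _ (hp j).pos]
  simp only [hk] at hs
  have hKpos : ∀ j, 0 < K j := fun j => Finset.prod_pos (fun i _ => (hp i).pos)
  have hdvd : ∀ i j : Fin n, i ≠ j → p j ∣ K i := by
    intro i j hij
    exact Finset.dvd_prod_of_mem p (Finset.mem_erase.mpr ⟨hij.symm, Finset.mem_univ j⟩)
  have hndvd : ∀ j : Fin n, ¬ p j ∣ K j := by
    intro j hdj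
    obtain ⟨i, hi, hdi⟩ := (Nat.Prime.prime (hp j)).exists_mem_finset_dvd hdj
    have : p j = p i := ((Nat.prime_dvd_prime_iff_eq (hp j) (hp i)).mp hdi)
    exact (Finset.mem_erase.mp hi).1 (hdist this.symm)
  have hge : ∀ j, 1 ≤ s j := by
    intro j
    by_contra h
    have hsj : s j = 0 := by omega
    haveI : Fact (p j).Prime := ⟨hp j⟩
    have h2 : ((∑ i, s i * K i : ℕ) : ZMod (p j)) = ((∑ i, K i : ℕ) : ZMod (p j)) := by
      rw [hs]
    push_cast at h2
    rw [Finset.sum_eq_single j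
        (fun i _ hij => by
          rw [(ZMod.natCast_eq_zero_iff _ _).mpr (hdvd i j hij), mul_zero])
        (fun h => absurd (Finset.mem_univ j) h),
      Finset.sum_eq_single j
        (fun i _ hij => (ZMod.natCast_eq_zero_iff _ _).mpr (hdvd i j hij))
        (fun h => absurd (Finset.mem_univ j) h)] at h2
    have hK0 : ((K j : ℕ) : ZMod (p j)) ≠ 0 := fun h0 =>
      hndvd j ((ZMod.natCast_eq_zero_iff _ _).mp h0)
    have h3 : ((s j : ℕ) : ZMod (p j)) = 1 :=
      mul_right_cancel₀ hK0 (by rw [h2, one_mul])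
    rw [hsj] at h3
    exact one_ne_zero (α := ZMod (p j)) (by exact_mod_cast h3.symm)
  intro j
  have hle : ∀ i ∈ Finset.univ, K i ≤ s i * K i := fun i _ =>
    Nat.le_mul_of_pos_left _ (hge i)
  have heq := (Finset.sum_eq_sum_iff_of_le hle).mp hs.symm j (Finset.mem_univ j)
  have := hKpos j
  nlinarith [heq]
end
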